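/- arXiv:2109.05630 — 7 statements merged into one kernel-verified Lean document; each statement's English description precedes it below -/
import Mathlib

section
/- For every integer m ≥ 1 and every tree T with m edges, there exists a partition of the vertex set of T into nonempty parts, each inducing a connected subgraph of T, such that the quotient graph (with one vertex per part, two parts adjacent if and only if some edge of T joins them) is a caterpillar with ⌈√(8m) − 2⌉ edges. -/
open SimpleGraph

/-- The number of edges of a simple graph. -/
noncomputable def edgeCount {V : Type*} (G : SimpleGraph V) : ℕ := G.edgeSet.ncard

/-- The degree of a vertex. -/
noncomputable def deg {V : Type*} (G : SimpleGraph V) (v : V) : ℕ := (G.neighborSet v).ncard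

/-- The number of leaves (vertices of degree 1). -/
noncomputable def leafCount {V : Type*} (G : SimpleGraph V) : ℕ := {v | deg G v = 1}.ncard

/-- The diameter: the maximum distance between two vertices. -/
noncomputable def treeDiam {V : Type*} (G : SimpleGraph V) : ℕ :=
  sSup {n | ∃ u v : V, G.dist u v = n}

/-- κ(T) = (number of leaves) + (diameter) - 2. -/
noncomputable def kappa {V : Type*} (G : SimpleGraph V) : ℕ :=
  leafCount G + treeDiam G - 2

/-- A graph is a path graph if it is acyclic, preconnected, and has maximum degree ≤ 2
(the empty graph counts as a path). -/
def IsPathGraph {W : Type*} (H : SimpleGraph W) : Prop :=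
  H.IsAcyclic ∧ H.Preconnected ∧
    ∀ v a b c : W, H.Adj v a → H.Adj v b → H.Adj v c → a = b ∨ a = c ∨ b = c

/-- A caterpillar is a tree whose non-leaf vertices induce a path. -/
def IsCaterpillar {V : Type*} (G : SimpleGraph V) : Prop :=
  G.IsTree ∧ IsPathGraph (G.induce {v | 2 ≤ deg G v})

/-- The quotient graph of `G` along a map `c` on vertices: two images are adjacent iff
they are distinct and some edge of `G` joins their fibers. -/
def quotientGraph {V W : Type*} (G : SimpleGraph V) (c : V → W) : SimpleGraph W where
  Adj a b := a ≠ b ∧ ∃ u v : V, c u = a ∧ c v = b ∧ G.Adj u v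
  symm := by
    constructor
    rintro a b ⟨hne, u, v, hu, hv, h⟩
    exact ⟨hne.symm, v, u, hv, hu, h.symm⟩
  loopless := by
    constructor
    rintro a ⟨hne, -⟩
    exact hne rfl

/-- A spider is a tree with at most one vertex of degree greater than 2. -/
def IsSpider {V : Type*} (G : SimpleGraph V) : Prop :=
  G.IsTree ∧ ∀ u v : V, 3 ≤ deg G u → 3 ≤ deg G v → u = v

/-- `k` is the maximum number of edges of a vertex-induced subgraph of `G`
that is a caterpillar. -/
def MaxInducedCaterpillar {V : Type*} (G : SimpleGraph V) (k : ℕ) : Prop :=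
  IsGreatest {j : ℕ | ∃ s : Set V, IsCaterpillar (G.induce s) ∧ edgeCount (G.induce s) = j} k

/-!
Let the spine `q` be a longest path of the tree, of length `d`, and let `ℓ` be the number of
leaves off `q`. Deleting the edges of `q` splits the tree into branches, one hanging at each
vertex of `q`. Since
`q` is longest, a branch reaches at most `⌊d / 2⌋` steps away from `q`, and every vertex off `q`
lies on the path from some leaf of its branch down to `q`; hence `m ≤ d + ℓ ⌊d / 2⌋`, so that
`8 m ≤ (ℓ + d + 2)²`. For `k = ⌈√(8m) − 2⌉` we have `(k + 1)² < 8 m`, hence `k ≤ ℓ + d`. Put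
`t = min k d`; keep `k − t` leaves off `q` as singleton parts, contract the rest of the branch at
the `i`-th vertex of `q` to one part for `i < t` and merge all the branches at the vertices
`t, …, d` into one more part. The quotient is a path of length `t` with `k − t` pendant leaves;
as a quotient of a tree by connected parts it is a tree, so it has `(t + 1 + (k − t)) − 1 = k`
edges.
-/

lemma eight_mul_le_sq {m d l : ℕ} (h : m ≤ d + l * (d / 2)) : 8 * m ≤ (l + d + 2) ^ 2 := by
  -- `(l + d + 2)² - 8 (d + l (d / 2)) ≥ (l - d + 2)²`
  have h₂ := Nat.mul_div_le d 2
  zify at h h₂ ⊢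
  nlinarith [sq_nonneg ((l : ℤ) - d + 2), Int.natCast_nonneg l]

lemma exists_natCast_eq_ceil_sqrt_eight_mul_sub_two {m : ℕ} (hm : 1 ≤ m) :
    ∃ k : ℕ, (k : ℤ) = ⌈Real.sqrt (8 * (m : ℝ)) - 2⌉ ∧ (k + 1) ^ 2 < 8 * m := by
  have hm' : (1 : ℝ) ≤ m := by exact_mod_cast hm
  have h2 : (2 : ℝ) ≤ Real.sqrt (8 * m) :=
    (Real.le_sqrt (by norm_num) (by positivity)).2 (by linarith)
  obtain ⟨k, hk⟩ := Int.eq_ofNat_of_zero_le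
    (Int.ceil_nonneg (by linarith) : 0 ≤ ⌈Real.sqrt (8 * (m : ℝ)) - 2⌉)
  refine ⟨k, hk.symm, ?_⟩
  have hlt : (k : ℝ) + 1 < Real.sqrt (8 * m) := by
    have := Int.ceil_lt_add_one (Real.sqrt (8 * (m : ℝ)) - 2)
    rw [hk] at this
    push_cast at this
    linarith
  have := (Real.lt_sqrt (by positivity)).1 hlt
  exact_mod_cast this

namespace SimpleGraph

variable {V : Type*} {G : SimpleGraph V}

lemma Walk.IsPath.two_le_deg_getVert [G.LocallyFinite] {u v : V} {p : G.Walk u v}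
    (hp : p.IsPath) {k : ℕ} (hk₀ : 0 < k) (hk : k < p.length) : 2 ≤ deg G (p.getVert k) := by
  have hprev := p.adj_getVert_succ (i := k - 1) (by omega)
  rw [Nat.sub_add_cancel hk₀] at hprev
  have hne : p.getVert (k - 1) ≠ p.getVert (k + 1) := fun h ↦ by
    have := hp.getVert_injOn (by simp; omega) (by simp; omega) h
    omega
  exact (Set.one_lt_ncard_iff (Set.toFinite _)).2
    ⟨_, _, hprev.symm, p.adj_getVert_succ hk, hne⟩

lemma Walk.reachable_induce_of_support_subset {s : Set V} {u v : V} (p : G.Walk u v)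
    (hp : ∀ w ∈ p.support, w ∈ s) :
    (G.induce s).Reachable ⟨u, hp u p.start_mem_support⟩ ⟨v, hp v p.end_mem_support⟩ :=
  (p.connected_induce_support.preconnected ⟨u, p.start_mem_support⟩
    ⟨v, p.end_mem_support⟩).map (induceHomOfLE G hp).toHom

lemma Walk.IsPath.eq_or_eq_or_two_le_deg [G.LocallyFinite] {u v x : V} {p : G.Walk u v}
    (hp : p.IsPath) (hx : x ∈ p.support) : x = u ∨ x = v ∨ 2 ≤ deg G x := by
  obtain ⟨k, rfl, hk⟩ := Walk.mem_support_iff_exists_getVert.1 hx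
  rcases Nat.eq_zero_or_pos k with rfl | hk₀
  · exact .inl p.getVert_zero
  rcases hk.lt_or_eq with hk | rfl
  · exact .inr (.inr (hp.two_le_deg_getVert hk₀ hk))
  · exact .inr (.inl p.getVert_length)

lemma Walk.reachable_induce_getVert {u v : V} (p : G.Walk u v) {s : Set V} {a b : ℕ}
    (hab : a ≤ b) (hb : b ≤ p.length) (hs : ∀ r, a ≤ r → r ≤ b → p.getVert r ∈ s) :
    (G.induce s).Reachable ⟨p.getVert a, hs a le_rfl hab⟩ ⟨p.getVert b, hs b hab le_rfl⟩ := by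
  induction b, hab using Nat.le_induction with
  | base => rfl
  | succ b hab ih =>
    refine (ih (by omega) fun r h₁ h₂ ↦ hs r h₁ (by omega)).trans (Adj.reachable ?_)
    simpa using p.adj_getVert_succ (by omega : b < p.length)

lemma Preconnected.not_adj_of_deg_eq_one [G.LocallyFinite] (hG : G.Preconnected) {x y w : V}
    (hx : deg G x = 1) (hy : deg G y = 1) (hwx : w ≠ x) (hwy : w ≠ y) : ¬ G.Adj x y := by
  intro hxy
  obtain ⟨p, hp⟩ := (hG x w).exists_isPath
  have hnil : ¬ p.Nil := fun h ↦ hwx h.eq.symm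
  obtain ⟨a, ha⟩ := Set.ncard_eq_one.1 hx
  have hsnd : y = p.snd := by
    have h₁ : y ∈ G.neighborSet x := hxy
    have h₂ : p.snd ∈ G.neighborSet x := p.adj_snd hnil
    rw [ha, Set.mem_singleton_iff] at h₁ h₂
    rw [h₁, h₂]
  rcases hp.eq_or_eq_or_two_le_deg (x := y) (by rw [hsnd]; exact p.getVert_mem_support 1) with
      h | h | h
  · exact hxy.ne h.symm
  · exact hwy h.symm
  · omega

lemma IsTree.card_eq_edgeCount_add_one [Finite V] (hG : G.IsTree) :
    Nat.card V = edgeCount G + 1 := by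
  have := Fintype.ofFinite V
  have := Fintype.ofFinite G.edgeSet
  rw [Nat.card_eq_fintype_card, ← hG.card_edgeFinset, edgeCount, ← coe_edgeFinset,
    Set.ncard_coe_finset]

lemma isCaterpillar_of_forall_adj [G.LocallyFinite] (hG : G.IsTree)
    (h : ∀ v a b c : V, 2 ≤ deg G a → 2 ≤ deg G b → 2 ≤ deg G c →
      G.Adj v a → G.Adj v b → G.Adj v c → a = b ∨ a = c ∨ b = c) :
    IsCaterpillar G := by
  refine ⟨hG, hG.isAcyclic.induce _, ?_, ?_⟩
  · rintro ⟨u, hu⟩ ⟨w, hw⟩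
    obtain ⟨p, hp⟩ := (hG.connected u w).exists_isPath
    have hs : ∀ x ∈ p.support, x ∈ {x | 2 ≤ deg G x} := fun x hx ↦ by
      rcases hp.eq_or_eq_or_two_le_deg hx with rfl | rfl | h
      exacts [hu, hw, h]
    exact p.reachable_induce_of_support_subset hs
  · intro v a b c hva hvb hvc
    simpa [Subtype.ext_iff] using h v a b c a.2 b.2 c.2 hva hvb hvc

section Quotient

variable {W : Type*} {c : V → W}

lemma reachable_quotientGraph {x y : V} (h : G.Reachable x y) :
    (quotientGraph G c).Reachable (c x) (c y) := by
  obtain ⟨p⟩ := h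
  induction p with
  | nil => rfl
  | @cons u v _ huv _ ih =>
    by_cases hc : c u = c v
    · rwa [hc]
    · have hadj : (quotientGraph G c).Adj (c u) (c v) := ⟨hc, u, v, rfl, rfl, huv⟩
      exact hadj.reachable.trans ih

lemma reachable_of_reachable_map {G' : SimpleGraph V} {Q : SimpleGraph W}
    (hfib : ∀ x y, c x = c y → G'.Reachable x y)
    (hadj : ∀ a b, Q.Adj a b → ∃ x y, c x = a ∧ c y = b ∧ G'.Adj x y)
    {x y : V} (h : Q.Reachable (c x) (c y)) : G'.Reachable x y := by
  suffices ∀ {a b} (p : Q.Walk a b) x y, c x = a → c y = b → G'.Reachable x y from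
    this h.some x y rfl rfl
  intro a b p
  induction p with
  | nil => exact fun x y hx hy ↦ hfib x y (hx.trans hy.symm)
  | cons hab _ ih =>
    intro x y hx hy
    obtain ⟨x', y', hx', hy', hxy'⟩ := hadj _ _ hab
    exact (hfib x x' (hx.trans hx'.symm)).trans (hxy'.reachable.trans (ih y' y hy' hy))

lemma reachable_deleteEdges_of_apply_eq (hfib : ∀ w, (G.induce (c ⁻¹' {w})).Connected)
    {x y x' y' : V} (hxy : c x ≠ c y) (h : c x' = c y') :
    (G.deleteEdges {s(x, y)}).Reachable x' y' := by
  have hf : ∀ u v : c ⁻¹' {c x'}, s(u.1, v.1) ∉ ({s(x, y)} : Set (Sym2 V)) := by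
    rintro ⟨u, hu : c u = c x'⟩ ⟨v, hv : c v = c x'⟩ he
    rcases Sym2.eq_iff.1 (Set.mem_singleton_iff.1 he) with ⟨rfl, rfl⟩ | ⟨rfl, rfl⟩
    · exact hxy (hu.trans hv.symm)
    · exact hxy (hv.trans hu.symm)
  let f : G.induce (c ⁻¹' {c x'}) →g G.deleteEdges {s(x, y)} :=
    ⟨Subtype.val, fun {u v} huv ↦ deleteEdges_adj.2 ⟨huv, hf u v⟩⟩
  exact ((hfib (c x')).preconnected ⟨x', rfl⟩ ⟨y', h.symm⟩).map f

lemma isTree_quotientGraph (hG : G.IsTree) (hc : Function.Surjective c)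
    (hfib : ∀ w, (G.induce (c ⁻¹' {w})).Connected) : (quotientGraph G c).IsTree := by
  refine ⟨(connected_iff _).2 ⟨fun a b ↦ ?_, hG.connected.nonempty.map c⟩, ?_⟩
  · obtain ⟨x, rfl⟩ := hc a
    obtain ⟨y, rfl⟩ := hc b
    exact reachable_quotientGraph (hG.connected x y)
  refine isAcyclic_iff_forall_adj_isBridge.2 ?_
  rintro _ _ ⟨hne, x, y, rfl, rfl, hxy⟩ hreach
  refine isAcyclic_iff_forall_adj_isBridge.1 hG.isAcyclic hxy (reachable_of_reachable_map
    (fun _ _ ↦ reachable_deleteEdges_of_apply_eq hfib hne) (fun a b hab ↦ ?_) hreach)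
  obtain ⟨⟨hab, u, v, rfl, rfl, huv⟩, hnot⟩ := deleteEdges_adj.1 hab
  refine ⟨u, v, rfl, rfl, deleteEdges_adj.2 ⟨huv, fun he ↦ hnot ?_⟩⟩
  simpa using congrArg (Sym2.map c) (Set.mem_singleton_iff.1 he)

end Quotient

namespace Walk

lemma IsPath.append {u v w : V} {p : G.Walk u v} {p' : G.Walk v w} (hp : p.IsPath)
    (hp' : p'.IsPath) (h : ∀ x ∈ p.support, x ∈ p'.support → x = v) : (p.append p').IsPath := by
  have hv := hp'.support_nodup
  rw [← cons_tail_support, List.nodup_cons] at hv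
  rw [isPath_def, support_append]
  refine hp.support_nodup.append hv.2 fun x hx hx' ↦ ?_
  obtain rfl := h x hx (List.mem_of_mem_tail hx')
  exact hv.1 hx'

variable {u₀ u₁ : V}

/-- The graph left by deleting the edges of `q`: when `G` is a tree, its components are the
branches of `G` hanging at the vertices of `q`. -/
abbrev branchGraph (q : G.Walk u₀ u₁) : SimpleGraph V := G.deleteEdges {e | e ∈ q.edges}

variable {q : G.Walk u₀ u₁}

lemma branchGraph_adj_of_notMem_support {v w : V} (h : G.Adj v w) (hv : v ∉ q.support) :
    q.branchGraph.Adj v w :=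
  deleteEdges_adj.2 ⟨h, fun he ↦ hv (q.fst_mem_support_of_mem_edges he)⟩

lemma IsPath.eq_of_reachable_branchGraph (hG : G.IsAcyclic) (hq : q.IsPath) {u w : V}
    (hu : u ∈ q.support) (hw : w ∈ q.support) (h : q.branchGraph.Reachable u w) : u = w := by
  classical
  induction q generalizing u w with
  | nil => simp_all
  | @cons a a' b hadj q' ih =>
    rw [cons_isPath_iff] at hq
    -- `a` reaching `q'` off the path would bypass the bridge `aa'`
    have key : ∀ w ∈ q'.support, ¬ (cons hadj q').branchGraph.Reachable a w := by
      intro w hw hR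
      refine isAcyclic_iff_forall_adj_isBridge.1 hG hadj ((hR.mono (deleteEdges_anti ?_)).trans
        (reachable_deleteEdges_iff_exists_walk.2 ⟨(q'.takeUntil w hw).reverse, fun he ↦ hq.2 ?_⟩))
      · simp
      · rw [edges_reverse, List.mem_reverse] at he
        exact q'.support_takeUntil_subset_support hw (fst_mem_support_of_mem_edges _ he)
    rw [support_cons, List.mem_cons] at hu hw
    rcases hu with rfl | hu <;> rcases hw with rfl | hw
    · rfl
    · exact (key w hw h).elim
    · exact (key u hu h.symm).elim
    · exact ih hq.1 hu hw (h.mono (deleteEdges_anti (by simp +contextual)))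

lemma exists_reachable_branchGraph (q : G.Walk u₀ u₁) {v : V} (hv : G.Reachable v u₀) :
    ∃ i ≤ q.length, q.branchGraph.Reachable v (q.getVert i) := by
  suffices ∀ {w} (p : G.Walk v w), w ∈ q.support → ∃ x ∈ q.support, q.branchGraph.Reachable v x by
    obtain ⟨x, hx, hvx⟩ := this hv.some q.start_mem_support
    obtain ⟨i, rfl, hi⟩ := mem_support_iff_exists_getVert.1 hx
    exact ⟨i, hi, hvx⟩
  intro w p hw
  clear hv
  induction p with
  | nil => exact ⟨_, hw, .rfl⟩
  | @cons v v' w hadj p ih =>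
    by_cases hv : v ∈ q.support
    · exact ⟨v, hv, .rfl⟩
    obtain ⟨x, hx, hvx⟩ := ih hw
    exact ⟨x, hx, (branchGraph_adj_of_notMem_support hadj hv).reachable.trans hvx⟩

variable (q) in
noncomputable def spineIndex (v : V) : ℕ :=
  sInf {i | i ≤ q.length ∧ q.branchGraph.Reachable v (q.getVert i)}

lemma spineIndex_spec (hG : G.Connected) (v : V) :
    q.spineIndex v ≤ q.length ∧ q.branchGraph.Reachable v (q.getVert (q.spineIndex v)) :=
  Nat.sInf_mem (q.exists_reachable_branchGraph (hG v u₀))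

lemma spineIndex_eq_of_reachable {u v : V} (h : q.branchGraph.Reachable u v) :
    q.spineIndex u = q.spineIndex v := by
  have : ∀ i, q.branchGraph.Reachable u (q.getVert i) ↔ q.branchGraph.Reachable v (q.getVert i) :=
    fun i ↦ ⟨h.symm.trans, h.trans⟩
  simp only [spineIndex, this]

lemma IsPath.spineIndex_getVert (hG : G.IsTree) (hq : q.IsPath) {i : ℕ} (hi : i ≤ q.length) :
    q.spineIndex (q.getVert i) = i := by
  obtain ⟨hle, hreach⟩ := q.spineIndex_spec hG.connected (q.getVert i)
  exact hq.getVert_injOn (by simpa using hle) (by simpa using hi)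
    (hq.eq_of_reachable_branchGraph hG.isAcyclic (q.getVert_mem_support _)
      (q.getVert_mem_support _) hreach).symm

lemma IsPath.spineIndex_adj (hG : G.IsTree) (hq : q.IsPath) {u v : V} (h : G.Adj u v) :
    q.spineIndex u = q.spineIndex v ∨ q.spineIndex u + 1 = q.spineIndex v ∨
      q.spineIndex v + 1 = q.spineIndex u := by
  by_cases he : s(u, v) ∈ q.edges
  · obtain ⟨r, hr, hruv⟩ := (q.mk_mem_edges_iff_exists).1 he
    have h₁ := hq.spineIndex_getVert hG hr.le
    have h₂ := hq.spineIndex_getVert hG (i := r + 1) hr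
    rcases Sym2.eq_iff.1 hruv with ⟨rfl, rfl⟩ | ⟨rfl, rfl⟩ <;> omega
  · exact .inl (spineIndex_eq_of_reachable (deleteEdges_adj.2 ⟨h, he⟩).reachable)

variable (q) in
open Classical in
noncomputable def branchPath (hG : G.Connected) (v : V) :
    q.branchGraph.Walk v (q.getVert (q.spineIndex v)) :=
  (q.spineIndex_spec hG v).2.some.bypass

lemma branchPath_isPath (hG : G.Connected) (v : V) : (q.branchPath hG v).IsPath := by
  classical
  exact bypass_isPath _

lemma spineIndex_of_mem_support_branchPath (hG : G.Connected) {v x : V}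
    (hx : x ∈ (q.branchPath hG v).support) : q.spineIndex x = q.spineIndex v := by
  classical
  exact (spineIndex_eq_of_reachable ((q.branchPath hG v).takeUntil x hx).reachable).symm

lemma IsPath.eq_of_mem_support_branchPath (hG : G.IsTree) (hq : q.IsPath) {v x : V}
    (hx : x ∈ (q.branchPath hG.connected v).support) (hxq : x ∈ q.support) :
    x = q.getVert (q.spineIndex v) := by
  classical
  exact hq.eq_of_reachable_branchGraph hG.isAcyclic hxq (q.getVert_mem_support _)
    ((q.branchPath hG.connected v).dropUntil x hx).reachable

lemma IsPath.branchPath_eq (hG : G.IsTree) (hq : q.IsPath) {v : V} {i : ℕ} (hi : i ≤ q.length)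
    {p : q.branchGraph.Walk v (q.getVert i)} (hp : p.IsPath) :
    (q.branchPath hG.connected v).length = p.length ∧
      (q.branchPath hG.connected v).support = p.support := by
  have hidx : q.spineIndex v = i :=
    (spineIndex_eq_of_reachable p.reachable).trans (hq.spineIndex_getVert hG hi)
  have he : q.getVert (q.spineIndex v) = q.getVert i := by rw [hidx]
  have hcopy : ((q.branchPath hG.connected v).copy rfl he).IsPath := by
    simpa using branchPath_isPath hG.connected v
  have := ((hG.isAcyclic.anti (deleteEdges_le _)).subsingleton_path v _).elim ⟨_, hcopy⟩ ⟨p, hp⟩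
  rw [Subtype.mk.injEq] at this
  rw [← this, length_copy, support_copy]
  exact ⟨rfl, rfl⟩

lemma IsPath.branchPath_of_adj (hG : G.IsTree) (hq : q.IsPath) {y z : V} (hz : z ∉ q.support)
    (hzy : G.Adj z y) (hy : y ≠ (q.branchPath hG.connected z).snd) :
    (q.branchPath hG.connected y).length = (q.branchPath hG.connected z).length + 1 ∧
      (q.branchPath hG.connected y).support = y :: (q.branchPath hG.connected z).support := by
  have hB := branchGraph_adj_of_notMem_support hzy hz
  have hyP : y ∉ (q.branchPath hG.connected z).support := fun h ↦ hy
    ((hG.isAcyclic.anti (deleteEdges_le _)).eq_snd_of_adj_start (branchPath_isPath _ z) hB h)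
  simpa using hq.branchPath_eq hG (q.spineIndex_spec hG.connected z).1
    ((branchPath_isPath _ z).cons hyP (h := hB.symm))

/-- Among the vertices whose branch path passes through `v`, one with the longest branch path is
a leaf. -/
lemma IsPath.exists_leaf_getVert_branchPath [Finite V] (hG : G.IsTree) (hq : q.IsPath) {v : V}
    (hv : v ∉ q.support) :
    ∃ z, (deg G z = 1 ∧ z ∉ q.support) ∧
      ∃ k < (q.branchPath hG.connected z).length, (q.branchPath hG.connected z).getVert k = v := by
  set P := q.branchPath hG.connected
  obtain ⟨z, hvz, hmax⟩ := Set.exists_max_image {z | v ∈ (P z).support} (fun z ↦ (P z).length)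
    (Set.toFinite _) ⟨v, start_mem_support _⟩
  have hz : z ∉ q.support := by
    intro hz
    obtain ⟨i, rfl, hi⟩ := mem_support_iff_exists_getVert.1 hz
    have hvz : v ∈ (P (q.getVert i)).support := hvz
    rw [(hq.branchPath_eq hG hi IsPath.nil).2, support_nil, List.mem_singleton] at hvz
    exact hv (hvz ▸ q.getVert_mem_support _)
  have hne : ¬ (P z).Nil := fun h ↦ hz (h.eq ▸ q.getVert_mem_support _)
  have hdeg : G.neighborSet z = {(P z).snd} := by
    ext y
    refine ⟨fun hy ↦ ?_, ?_⟩
    · by_contra hys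
      obtain ⟨hlen, hsupp⟩ := hq.branchPath_of_adj hG hz hy hys
      have := hmax y (show v ∈ (P y).support by rw [hsupp]; exact List.mem_cons_of_mem _ hvz)
      simp only [P, hlen] at this
      omega
    · rintro rfl
      exact (deleteEdges_adj.1 ((P z).adj_snd hne)).1
  obtain ⟨k, rfl, hk⟩ := mem_support_iff_exists_getVert.1 hvz
  refine ⟨z, ⟨by rw [deg, hdeg, Set.ncard_singleton], hz⟩, k, hk.lt_of_ne ?_, rfl⟩
  rintro rfl
  apply hv
  rw [getVert_length]
  exact q.getVert_mem_support _

lemma IsPath.two_mul_length_branchPath_le (hG : G.IsTree) (hq : q.IsPath)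
    (hmax : ∀ (a b : V) (p : G.Walk a b), p.IsPath → p.length ≤ q.length) (v : V) :
    2 * (q.branchPath hG.connected v).length ≤ q.length := by
  classical
  have ha : q.getVert (q.spineIndex v) ∈ q.support := q.getVert_mem_support _
  set P := (q.branchPath hG.connected v).mapLe (deleteEdges_le _)
  have hP : P.IsPath := (branchPath_isPath _ v).mapLe _
  have hPq : ∀ x ∈ P.support, x ∈ q.support → x = q.getVert (q.spineIndex v) := fun x hx ↦
    hq.eq_of_mem_support_branchPath hG (by rwa [support_mapLe_eq_support] at hx)
  -- `P` followed by either half of `q` is a path, hence no longer than `q`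
  have h₁ := hmax _ _ _ (hP.append (hq.takeUntil ha).reverse fun x hx hx' ↦
    hPq x hx (support_takeUntil_subset_support _ _ (by simpa using hx')))
  have h₂ := hmax _ _ _ (hP.append (hq.dropUntil ha) fun x hx hx' ↦
    hPq x hx (support_dropUntil_subset_support _ _ hx'))
  have h₃ := congrArg length (q.take_spec ha)
  simp only [P, length_append, length_reverse, length_mapLe] at h₁ h₂ h₃
  omega

open Finset in
lemma IsPath.card_notMem_support_le [Fintype V] [DecidableEq V] (hG : G.IsTree) (hq : q.IsPath)
    (hmax : ∀ (a b : V) (p : G.Walk a b), p.IsPath → p.length ≤ q.length) :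
    #{v | v ∉ q.support} ≤ #{z | deg G z = 1 ∧ z ∉ q.support} * (q.length / 2) := by
  calc #{v | v ∉ q.support}
      ≤ #((({z | deg G z = 1 ∧ z ∉ q.support} : Finset V) ×ˢ range (q.length / 2)).image
          fun zk ↦ (q.branchPath hG.connected zk.1).getVert zk.2) := by
        refine card_le_card fun v hv ↦ ?_
        obtain ⟨z, hz, k, hk, rfl⟩ := hq.exists_leaf_getVert_branchPath hG (by simpa using hv)
        have := hq.two_mul_length_branchPath_le hG hmax z
        exact mem_image.2 ⟨(z, k), mem_product.2 ⟨by simpa using hz, mem_range.2 (by omega)⟩, rfl⟩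
    _ ≤ _ := card_image_le.trans (card_product _ _ ▸ card_range _ ▸ le_rfl)

open Finset in
lemma IsPath.edgeCount_le [Fintype V] [DecidableEq V] (hG : G.IsTree) (hq : q.IsPath)
    (hmax : ∀ (a b : V) (p : G.Walk a b), p.IsPath → p.length ≤ q.length) :
    edgeCount G ≤ q.length + #{z | deg G z = 1 ∧ z ∉ q.support} * (q.length / 2) := by
  have hV : Fintype.card V = edgeCount G + 1 := by
    rw [← Nat.card_eq_fintype_card, hG.card_eq_edgeCount_add_one]
  have hoff : ({v | v ∉ q.support} : Finset V) = q.support.toFinsetᶜ := by ext; simp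
  have := hq.card_notMem_support_le hG hmax
  rw [hoff, card_compl, List.toFinset_card_of_nodup hq.support_nodup, length_support, hV] at this
  omega

variable {t s : ℕ} {L : Finset V}

variable (q t) in
open Classical in
/-- The leaves in `L` become singleton parts; any other vertex goes to part `min t i`, where `i`
is the index of its branch, so that the quotient is the path `0, …, t` with the leaves of `L`
attached. -/
noncomputable def caterpillarContraction (e : L ≃ Fin s) (v : V) : Fin (t + 1) ⊕ Fin s :=
  if h : v ∈ L then .inr (e ⟨v, h⟩) else .inl ⟨min t (q.spineIndex v), by omega⟩

lemma caterpillarContraction_eq_inr_iff {e : L ≃ Fin s} {v : V} {a : Fin s} :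
    q.caterpillarContraction t e v = .inr a ↔ v = e.symm a := by
  by_cases h : v ∈ L
  · simp only [caterpillarContraction, h, dite_true, Sum.inr.injEq, ← Equiv.eq_symm_apply,
      Subtype.ext_iff]
  · simp only [caterpillarContraction, h, dite_false, reduceCtorEq, false_iff]
    rintro rfl
    exact h (e.symm a).2

lemma caterpillarContraction_eq_inl_iff {e : L ≃ Fin s} {v : V} {i : Fin (t + 1)} :
    q.caterpillarContraction t e v = .inl i ↔ v ∉ L ∧ min t (q.spineIndex v) = i := by
  by_cases h : v ∈ L
  · simp [caterpillarContraction, h]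
  · simp [caterpillarContraction, h, Fin.ext_iff]

lemma IsPath.caterpillarContraction_getVert (hG : G.IsTree) (hq : q.IsPath)
    (hL : ∀ z ∈ L, deg G z = 1 ∧ z ∉ q.support) {e : L ≃ Fin s} {r : ℕ} (hr : r ≤ q.length) :
    q.caterpillarContraction t e (q.getVert r) = .inl ⟨min t r, by omega⟩ :=
  caterpillarContraction_eq_inl_iff.2 ⟨fun h ↦ (hL _ h).2 (q.getVert_mem_support _),
    by rw [hq.spineIndex_getVert hG hr]⟩

lemma IsPath.surjective_caterpillarContraction (hG : G.IsTree) (hq : q.IsPath)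
    (hL : ∀ z ∈ L, deg G z = 1 ∧ z ∉ q.support) (e : L ≃ Fin s) (ht : t ≤ q.length) :
    Function.Surjective (q.caterpillarContraction t e) := by
  rintro (i | a)
  · refine ⟨q.getVert i, ?_⟩
    rw [hq.caterpillarContraction_getVert hG hL (by omega)]
    simp [Nat.lt_succ_iff.1 i.2]
  · exact ⟨e.symm a, caterpillarContraction_eq_inr_iff.2 rfl⟩

lemma notMem_of_mem_support_branchPath [G.LocallyFinite] (hG : G.IsTree)
    (hL : ∀ z ∈ L, deg G z = 1 ∧ z ∉ q.support) {v x : V} (hv : v ∉ L)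
    (hx : x ∈ (q.branchPath hG.connected v).support) : x ∉ L := by
  intro hxL
  rw [← support_mapLe_eq_support (deleteEdges_le _)] at hx
  rcases ((branchPath_isPath _ v).mapLe _).eq_or_eq_or_two_le_deg hx with rfl | rfl | h
  · exact hv hxL
  · exact (hL _ hxL).2 (q.getVert_mem_support _)
  · have := (hL x hxL).1
    omega

lemma IsPath.connected_induce_preimage_caterpillarContraction [G.LocallyFinite] (hG : G.IsTree)
    (hq : q.IsPath) (hL : ∀ z ∈ L, deg G z = 1 ∧ z ∉ q.support) (e : L ≃ Fin s)
    (ht : t ≤ q.length) (w : Fin (t + 1) ⊕ Fin s) :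
    (G.induce (q.caterpillarContraction t e ⁻¹' {w})).Connected := by
  rcases w with i | a
  · set F := q.caterpillarContraction t e ⁻¹' {.inl i}
    have hF : ∀ {v}, v ∈ F ↔ v ∉ L ∧ min t (q.spineIndex v) = i :=
      caterpillarContraction_eq_inl_iff
    have hspine : ∀ r ≤ q.length, min t r = i → q.getVert r ∈ F := fun r hr h ↦ by
      simp [F, hq.caterpillarContraction_getVert hG hL hr, h]
    have := i.2
    have hi := hspine i (by omega) (by omega)
    refine (connected_iff_exists_forall_reachable _).2 ⟨⟨_, hi⟩, fun ⟨v, hv⟩ ↦ ?_⟩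
    obtain ⟨hvL, hvi⟩ := hF.1 hv
    obtain ⟨hj, -⟩ := q.spineIndex_spec hG.connected v
    -- `v` reaches its spine vertex inside its branch, which then runs along `q` to `q.getVert i`
    set P := (q.branchPath hG.connected v).mapLe (deleteEdges_le _)
    have hbranch : ∀ x ∈ P.support, x ∈ F := fun x hx ↦ by
      rw [support_mapLe_eq_support] at hx
      exact hF.2 ⟨notMem_of_mem_support_branchPath hG hL hvL hx,
        by rw [spineIndex_of_mem_support_branchPath _ hx, hvi]⟩
    have halong := q.reachable_induce_getVert (s := F) (a := i) (b := q.spineIndex v) (by omega)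
      hj fun r h₁ h₂ ↦ hspine r (by omega) (by omega)
    exact halong.trans (P.reachable_induce_of_support_subset hbranch).symm
  · have : q.caterpillarContraction t e ⁻¹' {.inr a} = {(e.symm a : V)} :=
      Set.ext fun v ↦ caterpillarContraction_eq_inr_iff
    rw [this, induce_singleton_eq_top]
    exact connected_top

lemma caterpillarContraction_adj_inr [G.LocallyFinite] (hG : G.IsTree)
    (hL : ∀ z ∈ L, deg G z = 1 ∧ z ∉ q.support) {e : L ≃ Fin s} {a : Fin s}
    {w : Fin (t + 1) ⊕ Fin s}
    (h : (quotientGraph G (q.caterpillarContraction t e)).Adj (.inr a) w) :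
    w = .inl ⟨min t (q.spineIndex (e.symm a)), by omega⟩ := by
  obtain ⟨-, u, v, hu, rfl, huv⟩ := h
  rw [caterpillarContraction_eq_inr_iff] at hu
  subst hu
  obtain ⟨hdeg, hoff⟩ := hL _ (e.symm a).2
  have hvL : v ∉ L := fun hv ↦ hG.connected.preconnected.not_adj_of_deg_eq_one hdeg (hL v hv).1
    (fun h ↦ hoff (h ▸ q.start_mem_support)) (fun h ↦ (hL v hv).2 (h ▸ q.start_mem_support)) huv
  exact caterpillarContraction_eq_inl_iff.2 ⟨hvL, congrArg (min t)
    (spineIndex_eq_of_reachable (branchGraph_adj_of_notMem_support huv hoff).reachable).symm⟩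

lemma IsPath.caterpillarContraction_adj_inl (hG : G.IsTree) (hq : q.IsPath) {e : L ≃ Fin s}
    {i j : Fin (t + 1)}
    (h : (quotientGraph G (q.caterpillarContraction t e)).Adj (.inl i) (.inl j)) :
    (i : ℕ) + 1 = j ∨ (j : ℕ) + 1 = i := by
  obtain ⟨hne, u, v, hu, hv, huv⟩ := h
  rw [caterpillarContraction_eq_inl_iff] at hu hv
  have hij : (i : ℕ) ≠ j := fun h ↦ hne (by rw [Fin.ext h])
  have := hq.spineIndex_adj hG huv
  omega

lemma IsPath.isCaterpillar_quotientGraph_caterpillarContraction [G.LocallyFinite]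
    (hG : G.IsTree) (hq : q.IsPath) (hL : ∀ z ∈ L, deg G z = 1 ∧ z ∉ q.support) (e : L ≃ Fin s)
    (ht : t ≤ q.length) : IsCaterpillar (quotientGraph G (q.caterpillarContraction t e)) := by
  classical
  set Q := quotientGraph G (q.caterpillarContraction t e)
  have hinl : ∀ w, 2 ≤ deg Q w → ∃ i, w = .inl i := by
    rintro (i | a) h
    · exact ⟨i, rfl⟩
    have hsub : Q.neighborSet (.inr a) ⊆ {.inl _} := fun w hw ↦
      caterpillarContraction_adj_inr hG hL hw
    have := Set.ncard_le_ncard hsub (Set.finite_singleton _)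
    rw [Set.ncard_singleton] at this
    exact absurd h (by unfold deg; omega)
  refine isCaterpillar_of_forall_adj (isTree_quotientGraph hG
    (hq.surjective_caterpillarContraction hG hL e ht)
    (hq.connected_induce_preimage_caterpillarContraction hG hL e ht)) ?_
  intro v x y z hx hy hz hvx hvy hvz
  obtain ⟨x, rfl⟩ := hinl x hx
  obtain ⟨y, rfl⟩ := hinl y hy
  obtain ⟨z, rfl⟩ := hinl z hz
  rcases v with i | a
  · have := hq.caterpillarContraction_adj_inl hG hvx
    have := hq.caterpillarContraction_adj_inl hG hvy
    have := hq.caterpillarContraction_adj_inl hG hvz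
    simp only [Sum.inl.injEq, Fin.ext_iff]
    omega
  · left
    rw [caterpillarContraction_adj_inr hG hL hvx, caterpillarContraction_adj_inr hG hL hvy]

end Walk

open Finset in
theorem IsTree.exists_isCaterpillar_quotientGraph [Fintype V] (hG : G.IsTree) {k : ℕ}
    (hk : (k + 1) ^ 2 < 8 * edgeCount G) :
    ∃ (t s : ℕ) (c : V → Fin (t + 1) ⊕ Fin s), Function.Surjective c ∧
      (∀ w, (G.induce (c ⁻¹' {w})).Connected) ∧ IsCaterpillar (quotientGraph G c) ∧
      edgeCount (quotientGraph G c) = k := by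
  classical
  have := hG.connected.nonempty
  obtain ⟨u₀, u₁, q, hq, hmax⟩ := Walk.exists_isPath_forall_isPath_length_le_length G
  have hsq := eight_mul_le_sq (hq.edgeCount_le hG hmax)
  have hkle : k + 1 < #{z | deg G z = 1 ∧ z ∉ q.support} + q.length + 2 :=
    (Nat.pow_lt_pow_iff_left two_ne_zero).1 (hk.trans_le hsq)
  obtain ⟨L, hLsub, hL⟩ := exists_subset_card_eq (show k - min k q.length ≤
    #{z | deg G z = 1 ∧ z ∉ q.support} by omega)
  have hLleaf : ∀ z ∈ L, deg G z = 1 ∧ z ∉ q.support := fun z hz ↦ by simpa using hLsub hz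
  set e := L.equivFinOfCardEq hL
  have ht : min k q.length ≤ q.length := min_le_right _ _
  have hsurj := hq.surjective_caterpillarContraction hG hLleaf e ht
  have hfib := hq.connected_induce_preimage_caterpillarContraction hG hLleaf e ht
  refine ⟨_, _, q.caterpillarContraction (min k q.length) e, hsurj, hfib,
    hq.isCaterpillar_quotientGraph_caterpillarContraction hG hLleaf e ht, ?_⟩
  have := (isTree_quotientGraph hG hsurj hfib).card_eq_edgeCount_add_one
  rw [Nat.card_eq_fintype_card, Fintype.card_sum, Fintype.card_fin, Fintype.card_fin] at this
  omega

end SimpleGraph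

/-- For every integer `m ≥ 1` and every tree `T` with `m` edges, there is a
partition of the vertex set into nonempty connected parts (given by the fibers of a surjection
`c`) whose quotient graph is a caterpillar with `⌈√(8m) − 2⌉` edges. -/
theorem contract_tree_to_caterpillar (m : ℕ) (hm : 1 ≤ m)
    {V : Type*} [Fintype V] (G : SimpleGraph V) (hG : G.IsTree) (hE : edgeCount G = m) :
    ∃ (W : Type) (_ : Fintype W) (c : V → W),
      Function.Surjective c ∧
      (∀ w : W, (G.induce (c ⁻¹' {w})).Connected) ∧
      IsCaterpillar (quotientGraph G c) ∧
      (edgeCount (quotientGraph G c) : ℤ) = ⌈Real.sqrt (8 * (m : ℝ)) - 2⌉ := by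
  obtain ⟨k, hk, hkm⟩ := exists_natCast_eq_ceil_sqrt_eight_mul_sub_two hm
  obtain ⟨t, s, c, hc, hfib, hcat, hedge⟩ := hG.exists_isCaterpillar_quotientGraph (hE ▸ hkm)
  exact ⟨_, inferInstance, c, hc, hfib, hcat, by rw [hedge, hk]⟩
end

section
/- For every integer m ≥ 1 there exists a tree T with m edges such that every caterpillar obtained from T by contracting edges (i.e., every quotient of T by a partition of its vertex set into nonempty connected parts that happens to be a caterpillar) has at most ⌈√(8m) − 2⌉ edges. -/
open SimpleGraph

/-!
Take the spider with `a` legs of at most `b` edges each, where `a + 2b = ⌈√(8m)⌉` and `m ≤ ab`.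
Every edge of a quotient is the image of a cut edge, one whose ends lie in different parts, and a
leg contains at most `b` cut edges. If a leg is cut twice, the part just beyond its lowest cut is a
neighbour of the hub's part of degree at least two, and connectedness of the parts makes these
neighbours distinct for distinct legs. The spine of a caterpillar has maximum degree two, so at
most two legs are cut twice, and the quotient has at most `2b + (a - 2)` edges.
-/

open Finset

section General

variable {V W : Type*} {G : SimpleGraph V}

theorem SimpleGraph.Preconnected.exists_boundary_adj {s S : Set V}
    (hs : (G.induce s).Preconnected) {x y : V} (hx : x ∈ s) (hy : y ∈ s) (hxS : x ∉ S)
    (hyS : y ∈ S) : ∃ u ∈ s, ∃ v ∈ s, G.Adj u v ∧ u ∉ S ∧ v ∈ S := by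
  obtain ⟨p⟩ := hs ⟨x, hx⟩ ⟨y, hy⟩
  obtain ⟨d, -, hd₁, hd₂⟩ := p.exists_boundary_dart (Subtype.val ⁻¹' Sᶜ) hxS (by simpa using hyS)
  exact ⟨d.fst, d.fst.2, d.snd, d.snd.2, d.adj, hd₁, by simpa using hd₂⟩

theorem two_le_deg_of_adj [Finite V] {v x y : V} (hx : G.Adj v x) (hy : G.Adj v y)
    (hxy : x ≠ y) : 2 ≤ deg G v :=
  (Set.one_lt_ncard (Set.toFinite _)).mpr ⟨x, hx, y, hy, hxy⟩

theorem IsCaterpillar.not_three_adj_two_le_deg [Finite V] (hG : IsCaterpillar G)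
    {v x y z : V} (hx : G.Adj v x) (hy : G.Adj v y) (hz : G.Adj v z)
    (hxy : x ≠ y) (hxz : x ≠ z) (hyz : y ≠ z)
    (hx₂ : 2 ≤ deg G x) (hy₂ : 2 ≤ deg G y) (hz₂ : 2 ≤ deg G z) : False := by
  have hv₂ := two_le_deg_of_adj hx hy hxy
  have := hG.2.2.2 ⟨v, hv₂⟩ ⟨x, hx₂⟩ ⟨y, hy₂⟩ ⟨z, hz₂⟩ hx hy hz
  simp only [Subtype.mk.injEq] at this
  tauto

theorem quotientGraph_adj_of_adj (c : V → W) {u v : V} (h : G.Adj u v) (hc : c u ≠ c v) :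
    (quotientGraph G c).Adj (c u) (c v) :=
  ⟨hc, u, v, rfl, rfl, h⟩

theorem Finset.exists_lt_forall_lt_eq {α : Type*} [LinearOrder α] {s : Finset α}
    (hs : 2 ≤ #s) : ∃ x ∈ s, ∃ y ∈ s, x < y ∧ ∀ z ∈ s, z < y → z = x := by
  have hne : s.Nonempty := card_pos.mp (by omega)
  have hne' : (s.erase (s.min' hne)).Nonempty := by
    rw [← card_pos, card_erase_of_mem (s.min'_mem hne)]; omega
  have hy := (s.erase (s.min' hne)).min'_mem hne'
  refine ⟨_, s.min'_mem hne, _, mem_of_mem_erase hy,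
    lt_of_le_of_ne (s.min'_le _ (mem_of_mem_erase hy)) (ne_of_mem_erase hy).symm, ?_⟩
  intro z hz hzy
  by_contra hne''
  exact (min'_le _ z (mem_erase.mpr ⟨hne'', hz⟩)).not_gt hzy

theorem Finset.sum_add_two_le_of_card_filter_two_le {ι : Type*} (s : Finset ι) (f : ι → ℕ)
    {b : ℕ} (hb : 0 < b) (hf : ∀ i ∈ s, f i ≤ b) (hlarge : #{i ∈ s | 2 ≤ f i} ≤ 2) :
    ∑ i ∈ s, f i + 2 ≤ #s + 2 * b := by
  have hL : ∑ i ∈ s with 2 ≤ f i, f i ≤ #{i ∈ s | 2 ≤ f i} * b :=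
    sum_le_card_nsmul _ _ _ fun i hi => hf i (mem_filter.mp hi).1
  have hS : ∑ i ∈ s with ¬2 ≤ f i, f i ≤ #{i ∈ s | ¬2 ≤ f i} * 1 :=
    sum_le_card_nsmul _ _ _ fun i hi => by have := (mem_filter.mp hi).2; omega
  have hcard := card_filter_add_card_filter_not (s := s) (fun i => 2 ≤ f i)
  rw [← sum_filter_add_sum_filter_not s (fun i => 2 ≤ f i)]
  nlinarith

end General

section ParentGraph

variable {V W : Type*}

def parentGraph (p : V → V) : SimpleGraph V :=
  SimpleGraph.fromRel fun x y => x = p y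

variable {p : V → V}

theorem parentGraph_adj {x y : V} :
    (parentGraph p).Adj x y ↔ x ≠ y ∧ (x = p y ∨ y = p x) := by
  simp only [parentGraph, SimpleGraph.fromRel_adj]

theorem parentGraph_adj_parent {y : V} (hy : p y ≠ y) : (parentGraph p).Adj (p y) y :=
  parentGraph_adj.mpr ⟨hy, .inl rfl⟩

theorem parentGraph_edgeSet :
    (parentGraph p).edgeSet = (fun y => s(p y, y)) '' {y | p y ≠ y} := by
  ext e
  induction e using Sym2.ind with
  | _ x y =>
    simp only [SimpleGraph.mem_edgeSet, parentGraph_adj, Set.mem_image, Set.mem_ofPred_eq,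
      Sym2.eq_iff]
    constructor
    · rintro ⟨hne, rfl | rfl⟩
      · exact ⟨y, hne, .inl ⟨rfl, rfl⟩⟩
      · exact ⟨x, hne.symm, .inr ⟨rfl, rfl⟩⟩
    · rintro ⟨z, hz, ⟨rfl, rfl⟩ | ⟨rfl, rfl⟩⟩
      · exact ⟨hz, .inl rfl⟩
      · exact ⟨hz.symm, .inr rfl⟩

variable {r : V} {f : V → ℕ}

theorem parentGraph_reachable_root (hf : ∀ y, y ≠ r → f (p y) < f y) (y : V) :
    (parentGraph p).Reachable y r := by
  induction hy : f y using Nat.strong_induction_on generalizing y with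
  | _ n ih =>
    by_cases hyr : y = r
    · exact hyr ▸ .rfl
    have hlt := hf y hyr
    have hpy : p y ≠ y := fun h => (h ▸ hlt).false
    exact (parentGraph_adj_parent hpy).symm.reachable.trans (ih _ (hy ▸ hlt) _ rfl)

theorem parentGraph_connected (hf : ∀ y, y ≠ r → f (p y) < f y) :
    (parentGraph p).Connected :=
  have : Nonempty V := ⟨r⟩
  ⟨fun x y => (parentGraph_reachable_root hf x).trans (parentGraph_reachable_root hf y).symm⟩

theorem parentGraph_isTree [Finite V] (hr : p r = r) (hf : ∀ y, y ≠ r → f (p y) < f y) :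
    (parentGraph p).IsTree := by
  have hfix : {y | p y ≠ y} = {r}ᶜ := by
    ext y
    simp only [Set.mem_ofPred_eq, Set.mem_compl_iff, Set.mem_singleton_iff]
    exact ⟨fun h hyr => h (hyr ▸ hr), fun hyr h => (h ▸ hf y hyr).false⟩
  have hinj : Set.InjOn (fun y => s(p y, y)) {y | p y ≠ y} := by
    intro x hx y hy hxy
    rw [hfix] at hx hy
    rcases Sym2.eq_iff.mp hxy with ⟨-, h⟩ | ⟨h₁, h₂⟩
    · exact h
    · have hx' := hf x hx
      have hy' := hf y hy
      rw [h₁] at hx'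
      rw [← h₂] at hy'
      omega
  have : Nonempty V := ⟨r⟩
  rw [SimpleGraph.isTree_iff_connected_and_card, Nat.card_coe_set_eq, parentGraph_edgeSet,
    hinj.ncard_image, hfix, Set.ncard_compl, Set.ncard_singleton]
  exact ⟨parentGraph_connected hf, Nat.sub_add_cancel Nat.card_pos⟩

theorem edgeCount_quotientGraph_parentGraph_le [Finite V] (c : V → W) :
    edgeCount (quotientGraph (parentGraph p) c) ≤ {y | c (p y) ≠ c y}.ncard := by
  have hsub : (quotientGraph (parentGraph p) c).edgeSet ⊆
      (fun y => s(c (p y), c y)) '' {y | c (p y) ≠ c y} := by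
    intro e he
    induction e using Sym2.ind with
    | _ x y =>
      obtain ⟨hne, u, v, rfl, rfl, huv⟩ := he
      rcases (parentGraph_adj.mp huv).2 with rfl | rfl
      · exact ⟨v, hne, rfl⟩
      · exact ⟨u, hne.symm, Sym2.eq_swap⟩
  exact (Set.ncard_le_ncard hsub (Set.toFinite _)).trans (Set.ncard_image_le (Set.toFinite _))

end ParentGraph

theorem Nat.sub_modEq_self_of_le {a y : ℕ} (h : a ≤ y) : y - a ≡ y [MOD a] :=
  (Nat.sub_modulus_modEq_iff h).mpr rfl

section Spider

variable {W : Type*} {a m : ℕ}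

/-- Vertex `0` is the hub and `y > 0` hangs below `y - a`: the legs are the residue classes of
`1, …, m` modulo `a`. -/
def spiderParent (a : ℕ) {m : ℕ} (y : Fin (m + 1)) : Fin (m + 1) :=
  ⟨y - a, by omega⟩

def spider (a m : ℕ) : SimpleGraph (Fin (m + 1)) :=
  parentGraph (spiderParent a)

@[simp]
theorem spiderParent_val (y : Fin (m + 1)) : (spiderParent a y : ℕ) = y - a :=
  rfl

theorem spider_adj {u v : Fin (m + 1)} :
    (spider a m).Adj u v ↔ u ≠ v ∧ ((u : ℕ) = v - a ∨ (v : ℕ) = u - a) := by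
  simp only [spider, parentGraph_adj, Fin.ext_iff, spiderParent_val]

theorem spider_isTree (ha : 0 < a) : (spider a m).IsTree :=
  parentGraph_isTree (r := 0) (f := Fin.val) (Fin.ext (Nat.zero_sub a))
    fun y hy => by simp only [spiderParent_val]; have := Fin.pos_iff_ne_zero.mpr hy; omega

theorem spider_edgeCount (ha : 0 < a) : edgeCount (spider a m) = m := by
  have h := ((spider a m).isTree_iff_connected_and_card.mp (spider_isTree ha)).2
  rw [Nat.card_coe_set_eq, Nat.card_eq_fintype_card, Fintype.card_fin] at h
  exact Nat.add_right_cancel h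

theorem spider_eq_zero_of_adj_of_leg {t u v : Fin (m + 1)}
    (huv : (spider a m).Adj u v) (hv : v ≠ 0 ∧ (v : ℕ) ≡ t [MOD a])
    (hu : ¬(u ≠ 0 ∧ (u : ℕ) ≡ t [MOD a])) : u = 0 := by
  obtain ⟨hv₀, hvt⟩ := hv
  by_contra hu₀
  have := Fin.pos_iff_ne_zero.mpr hv₀
  have := Fin.pos_iff_ne_zero.mpr hu₀
  refine hu ⟨hu₀, ?_⟩
  rcases (spider_adj.mp huv).2 with h | h
  · rw [h]
    exact (Nat.sub_modEq_self_of_le (by omega)).trans hvt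
  · exact (Nat.sub_modEq_self_of_le (by omega)).symm.trans (h ▸ hvt)

theorem spider_eq_of_adj_of_desc {t u v : Fin (m + 1)} (ht : t ≠ 0)
    (huv : (spider a m).Adj u v) (hv : t ≤ v ∧ (v : ℕ) ≡ t [MOD a])
    (hu : ¬(t ≤ u ∧ (u : ℕ) ≡ t [MOD a])) : v = t := by
  obtain ⟨htv, hvt⟩ := hv
  have := Fin.pos_iff_ne_zero.mpr ht
  rw [Fin.le_def] at htv hu
  rcases (spider_adj.mp huv).2 with h | h
  · refine Fin.ext (le_antisymm (hvt.le_of_lt_add ?_) htv)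
    by_contra hge
    exact hu ⟨by omega, by rw [h]; exact (Nat.sub_modEq_self_of_le (by omega)).trans hvt⟩
  · exact absurd ⟨by omega, (Nat.sub_modEq_self_of_le (by omega)).symm.trans (h ▸ hvt)⟩ hu

variable (c : Fin (m + 1) → W)

/-- `x ≤ y` and `x = 0 ∨ x ≡ y` say that `x` lies on the path from `y` to the hub `0`; `h` says
that `c` is constant along each edge of that path. -/
theorem spider_apply_eq_of_uncut_path (ha : 0 < a) {x y : Fin (m + 1)} (hxy : x ≤ y)
    (hx : x = 0 ∨ (x : ℕ) ≡ y [MOD a])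
    (h : ∀ z, x < z → z ≤ y → (z : ℕ) ≡ y [MOD a] → c (spiderParent a z) = c z) :
    c x = c y := by
  induction y using WellFoundedLT.induction with
  | _ y ih =>
  rcases hxy.eq_or_lt with rfl | hlt
  · rfl
  rw [Fin.lt_def] at hlt
  have hpar : spiderParent a y < y := Fin.lt_def.mpr (by simp only [spiderParent_val]; omega)
  have hxpar : x ≤ spiderParent a y := by
    rcases hx with rfl | hx
    · exact Fin.zero_le _
    · have := hx.add_le_of_lt hlt
      exact Fin.le_def.mpr (by simp only [spiderParent_val]; omega)
  have hx' : x = 0 ∨ (x : ℕ) ≡ spiderParent a y [MOD a] := hx.imp_right fun hx =>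
    hx.trans (Nat.sub_modEq_self_of_le (by have := hx.add_le_of_lt hlt; omega)).symm
  have h' : ∀ z, x < z → z ≤ spiderParent a y → (z : ℕ) ≡ spiderParent a y [MOD a] →
      c (spiderParent a z) = c z := fun z hxz hzy hz => by
    rw [Fin.le_def, spiderParent_val] at hzy
    rw [Fin.lt_def] at hxz
    exact h z hxz (Fin.le_def.mpr (by omega)) (hz.trans (Nat.sub_modEq_self_of_le (by omega)))
  exact (ih _ hpar hxpar hx' h').trans (h y hlt le_rfl rfl)


theorem Fin.card_filter_mod_eq_le {b : ℕ} (ha : 0 < a) (hm : m ≤ a * b)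
    {s : Finset (Fin (m + 1))} (hs : 0 ∉ s) (r : ℕ) : #{z ∈ s | z.val % a = r} ≤ b := by
  have hpos : ∀ z ∈ s, 1 ≤ (z : ℕ) := fun z hz =>
    Nat.one_le_iff_ne_zero.mpr fun h => hs ((Fin.ext h : z = 0) ▸ hz)
  simpa using card_le_card_of_injOn (t := range b) (fun z : Fin (m + 1) => ((z : ℕ) - 1) / a)
    (fun z hz => by
      have := hpos z (mem_filter.mp hz).1
      have := z.isLt
      simp only [coe_range, Set.mem_Iio, Nat.div_lt_iff_lt_mul ha, mul_comm b]
      omega)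
    (fun z hz z' hz' hzz' => by
      obtain ⟨hz, hzr⟩ := mem_filter.mp hz
      obtain ⟨hz', hz'r⟩ := mem_filter.mp hz'
      have h₁ := hpos z hz
      have h₂ := hpos z' hz'
      have hmod : (z : ℕ) - 1 ≡ z' - 1 [MOD a] := Nat.ModEq.add_right_cancel' 1 (by
        rw [Nat.sub_add_cancel h₁, Nat.sub_add_cancel h₂]; exact hzr.trans hz'r.symm)
      have := Nat.ext_div_modEq hzz' hmod
      exact Fin.ext (by omega))

theorem spider_quotient_ne_of_not_modEq
    (hfib : ∀ w, ((spider a m).induce (c ⁻¹' {w})).Connected) {t t' : Fin (m + 1)}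
    (ht : t ≠ 0) (htt' : ¬(t : ℕ) ≡ t' [MOD a]) (hhub : c t ≠ c 0) : c t ≠ c t' := by
  intro heq
  -- a connected part meeting two legs contains the hub
  obtain ⟨u, hu, v, -, huv, huS, hvS⟩ :=
    (hfib (c t)).preconnected.exists_boundary_adj
      (S := {y : Fin (m + 1) | y ≠ 0 ∧ (y : ℕ) ≡ t [MOD a]}) (x := t') (y := t)
      heq.symm rfl (fun h => htt' h.2.symm) ⟨ht, rfl⟩
  obtain rfl := spider_eq_zero_of_adj_of_leg huv hvS huS
  exact hhub hu.symm

theorem spider_quotient_adj_of_two_cuts (ha : 0 < a)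
    (hfib : ∀ w, ((spider a m).induce (c ⁻¹' {w})).Connected) {t₁ t₂ : Fin (m + 1)}
    (h₁ : c (spiderParent a t₁) ≠ c t₁) (h₂ : c (spiderParent a t₂) ≠ c t₂)
    (hmod : (t₁ : ℕ) ≡ t₂ [MOD a]) (hlt : t₁ < t₂)
    (honly : ∀ z : Fin (m + 1), (z : ℕ) ≡ t₁ [MOD a] → z < t₂ →
      c (spiderParent a z) ≠ c z → z = t₁) :
    (quotientGraph (spider a m) c).Adj (c 0) (c t₁) ∧
      (quotientGraph (spider a m) c).Adj (c t₁) (c t₂) ∧ c t₂ ≠ c 0 := by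
  have ht₁ : t₁ ≠ 0 := by
    rintro rfl
    exact h₁ (congrArg c (Fin.ext (Nat.zero_sub a)))
  rw [Fin.lt_def] at hlt
  have hstep := hmod.add_le_of_lt hlt
  have hhub : c 0 = c (spiderParent a t₁) :=
    spider_apply_eq_of_uncut_path c ha (Fin.zero_le _) (.inl rfl) fun z hz hzt hzmod => by
      rw [Fin.lt_def] at hz
      rw [Fin.le_def, spiderParent_val] at hzt
      by_contra hcut
      have := honly z (hzmod.trans (Nat.sub_modEq_self_of_le (by omega))) (by
        rw [Fin.lt_def]; omega) hcut
      omega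
  have hleg : c t₁ = c (spiderParent a t₂) :=
    spider_apply_eq_of_uncut_path c ha (by rw [Fin.le_def, spiderParent_val]; omega)
      (.inr (hmod.trans (Nat.sub_modEq_self_of_le (by omega)).symm)) fun z hz hzt hzmod => by
      rw [Fin.le_def, spiderParent_val] at hzt
      by_contra hcut
      have := honly z ((hzmod.trans (Nat.sub_modEq_self_of_le (by omega))).trans hmod.symm)
        (by rw [Fin.lt_def]; omega) hcut
      exact hz.ne' this
  have hadj : ∀ t, c (spiderParent a t) ≠ c t →
      (quotientGraph (spider a m) c).Adj (c (spiderParent a t)) (c t) := fun t ht =>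
    quotientGraph_adj_of_adj c (parentGraph_adj_parent fun h => ht (congrArg c h)) ht
  refine ⟨hhub ▸ hadj t₁ h₁, hleg ▸ hadj t₂ h₂, fun heq => h₁ ?_⟩
  -- inside the hub's part, the path from the hub to `t₂` would pass through `t₁`
  obtain ⟨u, -, v, hv, huv, huS, hvS⟩ :=
    (hfib (c 0)).preconnected.exists_boundary_adj
      (S := {y : Fin (m + 1) | t₁ ≤ y ∧ (y : ℕ) ≡ t₁ [MOD a]}) (x := 0) (y := t₂) rfl heq
      (fun h => ht₁ (nonpos_iff_eq_zero.mp h.1)) ⟨Fin.le_def.mpr hlt.le, hmod.symm⟩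
  obtain rfl := spider_eq_of_adj_of_desc ht₁ huv hvS huS
  rw [← hhub]
  exact Eq.symm hv

theorem spider_exists_hub_neighbor_of_two_cuts [Finite W] [DecidableEq W] (ha : 0 < a)
    (hfib : ∀ w, ((spider a m).induce (c ⁻¹' {w})).Connected) {r : ℕ}
    (hr : 2 ≤ #{z | c (spiderParent a z) ≠ c z ∧ z.val % a = r}) :
    ∃ t : Fin (m + 1), t.val % a = r ∧ (quotientGraph (spider a m) c).Adj (c 0) (c t) ∧
      2 ≤ deg (quotientGraph (spider a m) c) (c t) := by
  obtain ⟨t₁, ht₁, t₂, ht₂, hlt, honly⟩ := exists_lt_forall_lt_eq hr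
  simp only [mem_filter, mem_univ, true_and] at ht₁ ht₂ honly
  obtain ⟨hhub, hleg, hne⟩ := spider_quotient_adj_of_two_cuts c ha hfib ht₁.1 ht₂.1
    (ht₁.2.trans ht₂.2.symm) hlt fun z hz hzt hcut => honly z ⟨hcut, Eq.trans hz ht₁.2⟩ hzt
  exact ⟨t₁, ht₁.2, hhub, two_le_deg_of_adj hhub.symm hleg hne.symm⟩

theorem spider_card_legs_with_two_cuts_le [Finite W] [DecidableEq W] (ha : 0 < a)
    (hfib : ∀ w, ((spider a m).induce (c ⁻¹' {w})).Connected)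
    (hcat : IsCaterpillar (quotientGraph (spider a m) c)) :
    #{r ∈ range a | 2 ≤ #{z | c (spiderParent a z) ≠ c z ∧ z.val % a = r}} ≤ 2 := by
  by_contra! h
  obtain ⟨r₁, r₂, r₃, hr₁, hr₂, hr₃, h₁₂, h₁₃, h₂₃⟩ := two_lt_card_iff.mp h
  obtain ⟨t₁, rfl, hadj₁, hdeg₁⟩ :=
    spider_exists_hub_neighbor_of_two_cuts c ha hfib (mem_filter.mp hr₁).2
  obtain ⟨t₂, rfl, hadj₂, hdeg₂⟩ :=
    spider_exists_hub_neighbor_of_two_cuts c ha hfib (mem_filter.mp hr₂).2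
  obtain ⟨t₃, rfl, hadj₃, hdeg₃⟩ :=
    spider_exists_hub_neighbor_of_two_cuts c ha hfib (mem_filter.mp hr₃).2
  have hne : ∀ {t t' : Fin (m + 1)}, (quotientGraph (spider a m) c).Adj (c 0) (c t) →
      t.val % a ≠ t'.val % a → c t ≠ c t' := fun hadj hmod =>
    spider_quotient_ne_of_not_modEq c hfib (fun h => hadj.ne (h ▸ rfl)) hmod hadj.ne.symm
  exact hcat.not_three_adj_two_le_deg hadj₁ hadj₂ hadj₃ (hne hadj₁ h₁₂) (hne hadj₁ h₁₃)
    (hne hadj₂ h₂₃) hdeg₁ hdeg₂ hdeg₃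

theorem spider_quotient_edgeCount_add_two_le [Finite W] {b : ℕ} (ha : 0 < a) (hb : 0 < b)
    (hab : m ≤ a * b) (hfib : ∀ w, ((spider a m).induce (c ⁻¹' {w})).Connected)
    (hcat : IsCaterpillar (quotientGraph (spider a m) c)) :
    edgeCount (quotientGraph (spider a m) c) + 2 ≤ a + 2 * b := by
  classical
  set C : Finset (Fin (m + 1)) := {z | c (spiderParent a z) ≠ c z}
  have hC₀ : 0 ∉ C := by
    simpa [C] using congrArg c (Fin.ext (Nat.zero_sub a))
  have hcut : edgeCount (quotientGraph (spider a m) c) ≤ #C := by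
    simpa [C, spider, Set.ncard_eq_toFinset_card'] using edgeCount_quotientGraph_parentGraph_le c
  have hlegs : ∀ r, #{z ∈ C | z.val % a = r} =
      #{z | c (spiderParent a z) ≠ c z ∧ z.val % a = r} := fun r => by rw [filter_filter]
  calc edgeCount (quotientGraph (spider a m) c) + 2
      ≤ ∑ r ∈ range a, #{z ∈ C | z.val % a = r} + 2 := by
        rw [← card_eq_sum_card_fiberwise fun z _ => mem_range.mpr (Nat.mod_lt _ ha)]; omega
    _ ≤ #(range a) + 2 * b := sum_add_two_le_of_card_filter_two_le _ _ hb
        (fun r _ => Fin.card_filter_mod_eq_le ha hab hC₀ r)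
        (by simpa only [hlegs] using spider_card_legs_with_two_cuts_le c ha hfib hcat)
    _ = a + 2 * b := by rw [card_range]

end Spider

theorem Nat.exists_add_two_mul_eq_le_mul {s m : ℕ} (hm : 0 < m) (hs : 8 * m ≤ s ^ 2) :
    ∃ a b, 0 < a ∧ 0 < b ∧ m ≤ a * b ∧ a + 2 * b = s := by
  have hs₃ : 3 ≤ s := by nlinarith
  have hb := Nat.div_add_mod (s + 1) 4
  have hb' := Nat.mod_lt (s + 1) (by norm_num : 0 < 4)
  -- with `b = ⌊(s + 1) / 4⌋` and `a = s - 2b`, `s² - 8ab = (s - 4b)² ≤ 4`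
  refine ⟨s - 2 * ((s + 1) / 4), (s + 1) / 4, by omega, by omega, ?_, by omega⟩
  set b := (s + 1) / 4
  have h2b : 2 * b ≤ s := by omega
  zify [h2b] at hs ⊢
  nlinarith [(by omega : (4 * b : ℤ) ≤ s + 1), (by omega : (s : ℤ) + 1 < 4 * b + 4)]

/-- For every `m ≥ 1` there is a tree with `m` edges such that every
caterpillar obtained from it by contracting edges (i.e., every quotient by a partition of the
vertex set into nonempty connected parts that is a caterpillar) has at most `⌈√(8m) − 2⌉`
edges. -/
theorem exists_tree_contraction_upper_bound (m : ℕ) (hm : 1 ≤ m) :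
    ∃ (V : Type) (_ : Fintype V) (G : SimpleGraph V),
      G.IsTree ∧ edgeCount G = m ∧
      ∀ (W : Type*) (c : V → W),
        Function.Surjective c →
        (∀ w : W, (G.induce (c ⁻¹' {w})).Connected) →
        IsCaterpillar (quotientGraph G c) →
        (edgeCount (quotientGraph G c) : ℤ) ≤ ⌈Real.sqrt (8 * (m : ℝ)) - 2⌉ := by
  have hs : 8 * m ≤ ⌈√(8 * (m : ℝ))⌉₊ ^ 2 := by
    have := (Real.sqrt_le_iff.mp (Nat.le_ceil (√(8 * (m : ℝ))))).2
    exact_mod_cast this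
  obtain ⟨a, b, ha, hb, hab, hsum⟩ := Nat.exists_add_two_mul_eq_le_mul hm hs
  refine ⟨Fin (m + 1), inferInstance, spider a m, spider_isTree ha, spider_edgeCount ha, ?_⟩
  intro W c hc hfib hcat
  have : Finite W := .of_surjective c hc
  have hbound := spider_quotient_edgeCount_add_two_le c ha hb hab hfib hcat
  rw [Int.ceil_sub_ofNat, ← Int.natCast_ceil_eq_ceil (by positivity)]
  omega
end

section
/- For every finite tree T with at least one edge, the maximum number of edges of a caterpillar that can be obtained from T by contracting edges (i.e., as a quotient of T by a partition of its vertex set into nonempty connected parts) equals κ(T), where κ(T) is the number of leaves of T plus the diameter of T minus 2. -/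
open SimpleGraph

/-!
A contraction with connected fibres can only shrink distances, and each leaf of the quotient
tree contains a leaf of `T` (two leaves of a nontrivial fibre cannot both be joined to the unique
neighbouring fibre, since two fibres are joined by at most one edge of a tree). In a caterpillar
the non-leaf vertices lie on one path, which extends by a leaf at each end; so the diameter is
the number of non-leaf vertices plus one, and the number of edges equals `κ`. This gives the
upper bound.

Conversely, if `T` is not a caterpillar, some non-leaf vertex has three non-leaf neighbours, and
a fixed diametral path uses at most two of these edges; so some edge `xy` between non-leaf
vertices has `y` off that path. Contracting `xy` keeps all leaves and the diametral path, hence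
`κ`, and induction on the number of vertices ends at a caterpillar with `κ(T)` edges.
-/

open Function

namespace SimpleGraph

variable {V X : Type*} {G : SimpleGraph V} {H : SimpleGraph X}

def spine (G : SimpleGraph V) : Set V := {v | 2 ≤ deg G v}

lemma deg_eq_degree (v : V) [Fintype (G.neighborSet v)] : deg G v = G.degree v := by
  rw [deg, Set.ncard_eq_toFinset_card', Set.toFinset_card, card_neighborSet_eq_degree]

lemma Connected.one_le_deg [Finite V] [Nontrivial V] (hG : G.Connected) (v : V) :
    1 ≤ deg G v := by
  obtain ⟨w, hw⟩ := exists_ne v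
  obtain ⟨p⟩ := hG.preconnected v w
  exact (Set.ncard_pos (Set.toFinite _)).2 ⟨_, p.adj_snd (Walk.not_nil_of_ne hw.symm)⟩

lemma connected_induce_singleton (v : V) : (G.induce {v}).Connected := by
  rw [induce_singleton_eq_top]
  exact connected_top

lemma deg_induce_of_neighborSet_subset {s : Set V} {x : s}
    (h : G.neighborSet x ⊆ s) : deg (G.induce s) x = deg G x := by
  rw [deg, deg, ← Subtype.val_injective.injOn.ncard_image]
  congr 1
  ext z
  exact ⟨fun ⟨_, hz, hzx⟩ => hzx ▸ hz, fun hz => ⟨⟨z, h hz⟩, hz, rfl⟩⟩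

lemma Reachable.exists_walk_support_subset {s : Set V} {u v : s}
    (h : (G.induce s).Reachable u v) : ∃ q : G.Walk u v, ∀ x ∈ q.support, x ∈ s := by
  obtain ⟨q⟩ := h
  refine ⟨q.map (Embedding.induce s).toHom, fun x hx => ?_⟩
  obtain ⟨y, -, rfl⟩ := List.mem_map.1 (Walk.support_map (Embedding.induce s).toHom q ▸ hx)
  exact y.2

lemma Iso.deg_eq (e : G ≃g H) (v : V) : deg H (e v) = deg G v := by
  rw [deg, deg, ← Nat.card_coe_set_eq, ← Nat.card_coe_set_eq]
  exact (Nat.card_congr (e.mapNeighborSet v)).symm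

lemma Iso.edgeCount_eq (e : G ≃g H) : edgeCount H = edgeCount G := by
  rw [edgeCount, edgeCount, ← Nat.card_coe_set_eq, ← Nat.card_coe_set_eq]
  exact (Nat.card_congr e.mapEdgeSet).symm

lemma IsTree.edgeCount_add_one [Finite V] (hG : G.IsTree) : edgeCount G + 1 = Nat.card V := by
  rw [edgeCount, ← Nat.card_coe_set_eq]
  exact (isTree_iff_connected_and_card.1 hG).2

lemma IsAcyclic.dist_eq_length (hA : G.IsAcyclic) {u v : V} {p : G.Walk u v} (hp : p.IsPath) :
    G.dist u v = p.length := by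
  obtain ⟨q, hq, hl⟩ := p.reachable.exists_path_of_dist
  rw [← hl]
  exact congrArg (fun r : G.Path u v => r.1.length)
    ((hA.subsingleton_path u v).elim ⟨q, hq⟩ ⟨p, hp⟩)

namespace Walk

variable {u v x : V} {p : G.Walk u v}

lemma IsPath.ncard_support (hp : p.IsPath) : {x | x ∈ p.support}.ncard = p.length + 1 := by
  classical
  rw [← p.length_support, ← List.toFinset_card_of_nodup hp.support_nodup, ← Set.ncard_coe_finset]
  simp

lemma IsPath.ncard_neighborSet_toSubgraph (hp : p.IsPath) (hx : x ∈ p.support) (hxu : x ≠ u)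
    (hxv : x ≠ v) : (p.toSubgraph.neighborSet x).ncard = 2 := by
  obtain ⟨i, rfl, hi⟩ := mem_support_iff_exists_getVert.mp hx
  have hi0 : i ≠ 0 := by rintro rfl; exact hxu p.getVert_zero
  have hil : i < p.length := lt_of_le_of_ne hi (by rintro rfl; exact hxv p.getVert_length)
  exact hp.ncard_neighborSet_toSubgraph_internal_eq_two hi0 hil

lemma IsPath.two_le_deg [Finite V] (hp : p.IsPath) (hx : x ∈ p.support) (hxu : x ≠ u)
    (hxv : x ≠ v) : 2 ≤ deg G x :=
  hp.ncard_neighborSet_toSubgraph hx hxu hxv ▸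
    Set.ncard_le_ncard (p.toSubgraph.neighborSet_subset x) (Set.toFinite _)

lemma IsPath.two_lt_deg [Finite V] (hp : p.IsPath) (hx : x ∈ p.support) (hxu : x ≠ u)
    (hxv : x ≠ v) {z : V} (hz : G.Adj x z) (hzp : z ∉ p.support) : 2 < deg G x := by
  have hzn : z ∉ p.toSubgraph.neighborSet x := fun h => hzp (p.mem_verts_toSubgraph.1 h.snd_mem)
  calc 2 < (insert z (p.toSubgraph.neighborSet x)).ncard := by
        rw [Set.ncard_insert_of_notMem hzn (Set.toFinite _),
          hp.ncard_neighborSet_toSubgraph hx hxu hxv]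
        omega
    _ ≤ deg G x := Set.ncard_le_ncard (Set.insert_subset hz (p.toSubgraph.neighborSet_subset x))
        (Set.toFinite _)

lemma IsPath.length_le_ncard_spine_add_one [Finite V] (hp : p.IsPath) :
    p.length ≤ G.spine.ncard + 1 := by
  have hsub : {x | x ∈ p.support} ⊆ G.spine ∪ {u, v} := fun x hx => by
    by_cases hxu : x = u; · exact Or.inr (Or.inl hxu)
    by_cases hxv : x = v; · exact Or.inr (Or.inr hxv)
    exact Or.inl (hp.two_le_deg hx hxu hxv)
  have := Set.ncard_le_ncard hsub (Set.toFinite _)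
  have := Set.ncard_union_le G.spine {u, v}
  have := Set.ncard_insert_le u {v}
  rw [hp.ncard_support, Set.ncard_singleton] at *
  omega

end Walk

lemma IsAcyclic.exists_adj_not_mem_support [Finite V] (hA : G.IsAcyclic) {x v : V}
    {p : G.Walk x v} (hp : p.IsPath) (hx : x ∈ G.spine) : ∃ z, G.Adj x z ∧ z ∉ p.support := by
  obtain ⟨a, b, ha, hb, hab⟩ := (Set.one_lt_ncard_iff (Set.toFinite _)).1 hx
  by_contra! h
  exact hab ((hA.eq_snd_of_adj_start hp ha (h a ha)).trans
    (hA.eq_snd_of_adj_start hp hb (h b hb)).symm)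

lemma bddAbove_dist [Finite V] : BddAbove {n | ∃ u v : V, G.dist u v = n} :=
  ((Set.finite_range fun q : V × V => G.dist q.1 q.2).subset
    (by rintro _ ⟨u, v, rfl⟩; exact ⟨(u, v), rfl⟩)).bddAbove

lemma dist_le_treeDiam [Finite V] (u v : V) : G.dist u v ≤ treeDiam G :=
  le_csSup bddAbove_dist ⟨u, v, rfl⟩

lemma treeDiam_le [Nonempty V] {m : ℕ} (h : ∀ u v : V, G.dist u v ≤ m) : treeDiam G ≤ m :=
  csSup_le ⟨G.dist (Classical.arbitrary V) (Classical.arbitrary V), _, _, rfl⟩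
    (by rintro _ ⟨u, v, rfl⟩; exact h u v)

lemma exists_dist_eq_treeDiam [Finite V] [Nonempty V] : ∃ u v : V, G.dist u v = treeDiam G :=
  Nat.sSup_mem (s := {n | ∃ u v : V, G.dist u v = n})
    ⟨_, Classical.arbitrary V, Classical.arbitrary V, rfl⟩ bddAbove_dist

lemma treeDiam_le_ncard_spine_add_one [Finite V] : treeDiam G ≤ G.spine.ncard + 1 := by
  cases isEmpty_or_nonempty V
  · simp [treeDiam]
  refine treeDiam_le fun u v => ?_
  by_cases hr : G.Reachable u v
  · obtain ⟨p, hp, hl⟩ := hr.exists_path_of_dist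
    exact hl ▸ hp.length_le_ncard_spine_add_one
  · simp [dist_eq_zero_of_not_reachable hr]

lemma leafCount_add_ncard_spine_le [Finite V] : leafCount G + G.spine.ncard ≤ Nat.card V := by
  have hleaf : leafCount G ≤ G.spineᶜ.ncard :=
    Set.ncard_le_ncard (fun v (hv : deg G v = 1) => by simp [spine, hv]) (Set.toFinite _)
  have := Set.ncard_add_ncard_compl G.spine
  omega

lemma IsTree.leafCount_add_ncard_spine [Finite V] [Nontrivial V] (hG : G.IsTree) :
    leafCount G + G.spine.ncard = Nat.card V := by
  have hleaf : {v | deg G v = 1} = G.spineᶜ := by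
    ext v
    have := hG.connected.one_le_deg v
    change deg G v = 1 ↔ ¬ 2 ≤ deg G v
    omega
  rw [leafCount, hleaf, add_comm, Set.ncard_add_ncard_compl]

end SimpleGraph

section Caterpillar

variable {V X : Type*} {G : SimpleGraph V} {H : SimpleGraph X}

lemma IsPathGraph.deg_le_two [Finite X] (hH : IsPathGraph H) (v : X) : deg H v ≤ 2 := by
  by_contra! h
  obtain ⟨a, b, c, ha, hb, hc, hab, hac, hbc⟩ := (Set.two_lt_ncard_iff (Set.toFinite _)).1 h
  rcases hH.2.2 v a b c ha hb hc with h | h | h <;> contradiction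

lemma IsPathGraph.exists_isPath_forall_mem_support [Finite X] [Nonempty X] (hH : IsPathGraph H) :
    ∃ (x y : X) (p : H.Walk x y), p.IsPath ∧ ∀ z, z ∈ p.support := by
  -- a longest path cannot be extended, and its inner vertices have no third neighbour
  obtain ⟨x, y, p, hp, hmax⟩ := Walk.exists_isPath_forall_isPath_length_le_length H
  refine ⟨x, y, p, hp, fun z => by_contra fun hz => ?_⟩
  obtain ⟨q⟩ := hH.2.1 x z
  obtain ⟨⟨⟨a, b⟩, hab⟩, -, ha, hb⟩ :=
    q.exists_boundary_dart {w | w ∈ p.support} p.start_mem_support hz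
  dsimp only at ha hb hab
  by_cases hax : a = x
  · subst hax
    have := hmax _ _ _ (hp.cons hb (h := hab.symm))
    simp at this
  by_cases hay : a = y
  · subst hay
    have := hmax _ _ _ (hp.concat hb hab)
    simp at this
  exact (hp.two_lt_deg ha hax hay hab hb).not_ge (hH.deg_le_two a)

lemma IsCaterpillar.exists_isPath_support_eq_spine [Finite V] (hG : IsCaterpillar G)
    (hS : G.spine.Nonempty) :
    ∃ (x y : V) (p : G.Walk x y), p.IsPath ∧ ∀ z, z ∈ p.support ↔ z ∈ G.spine := by
  have : Nonempty G.spine := hS.to_subtype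
  have hP : IsPathGraph (G.induce G.spine) := hG.2
  obtain ⟨x, y, p, hp, hall⟩ := hP.exists_isPath_forall_mem_support
  refine ⟨_, _, p.map (Embedding.induce G.spine).toHom,
    (Walk.isPath_map_iff_of_injective Subtype.val_injective).2 hp, fun z => ?_⟩
  simp only [Walk.support_map, List.mem_map]
  exact ⟨fun ⟨s, _, hs⟩ => hs ▸ s.2, fun hz => ⟨⟨z, hz⟩, hall _, rfl⟩⟩

lemma IsCaterpillar.ncard_spine_add_one_le_treeDiam [Finite V] [Nontrivial V]
    (hG : IsCaterpillar G) : G.spine.ncard + 1 ≤ treeDiam G := by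
  rcases G.spine.eq_empty_or_nonempty with hS | hS
  · obtain ⟨u, v, huv⟩ := exists_pair_ne V
    have := hG.1.connected.pos_dist_of_ne huv
    have := dist_le_treeDiam (G := G) u v
    simp only [hS, Set.ncard_empty]
    omega
  -- extend a path through the spine by a leaf at each end
  obtain ⟨x, y, q, hq, hqS⟩ := hG.exists_isPath_support_eq_spine hS
  have hA := hG.1.isAcyclic
  obtain ⟨ℓ₁, h₁, hℓ₁⟩ := hA.exists_adj_not_mem_support hq ((hqS x).1 q.start_mem_support)
  have hq₁ : (Walk.cons h₁.symm q).IsPath := hq.cons hℓ₁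
  obtain ⟨ℓ₂, h₂, hℓ₂⟩ :=
    hA.exists_adj_not_mem_support hq₁.reverse ((hqS y).1 q.end_mem_support)
  have hℓ₂' : ℓ₂ ∉ (Walk.cons h₁.symm q).support := fun h =>
    hℓ₂ (by rw [Walk.support_reverse]; exact List.mem_reverse.2 h)
  have hq₂ := hq₁.concat hℓ₂' h₂
  calc G.spine.ncard + 1 = (Walk.cons h₁.symm q |>.concat h₂).length := by
        rw [show G.spine = {z | z ∈ q.support} from Set.ext fun z => (hqS z).symm,
          hq.ncard_support]
        simp
    _ = G.dist ℓ₁ ℓ₂ := (hA.dist_eq_length hq₂).symm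
    _ ≤ treeDiam G := dist_le_treeDiam _ _

lemma IsCaterpillar.edgeCount_eq_kappa [Finite V] (hG : IsCaterpillar G) :
    edgeCount G = kappa G := by
  have hE := hG.1.edgeCount_add_one
  have hD := treeDiam_le_ncard_spine_add_one (G := G)
  rw [kappa]
  cases subsingleton_or_nontrivial V
  · have := leafCount_add_ncard_spine_le (G := G)
    have := Finite.card_le_one_iff_subsingleton.2 ‹Subsingleton V›
    omega
  · have := hG.1.leafCount_add_ncard_spine
    have := hG.ncard_spine_add_one_le_treeDiam
    omega

lemma IsPathGraph.of_iso (e : G ≃g H) (hG : IsPathGraph G) : IsPathGraph H := by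
  refine ⟨e.isAcyclic_iff.1 hG.1, e.preconnected_iff.1 hG.2.1, fun v a b c ha hb hc => ?_⟩
  simpa using hG.2.2 (e.symm v) (e.symm a) (e.symm b) (e.symm c) (e.symm.map_adj_iff.2 ha)
    (e.symm.map_adj_iff.2 hb) (e.symm.map_adj_iff.2 hc)

lemma IsCaterpillar.of_iso (e : G ≃g H) (hG : IsCaterpillar G) : IsCaterpillar H :=
  ⟨e.isTree_iff.1 hG.1, hG.2.of_iso (e.induce (e.toEquiv.bijOn fun v => by
    change 2 ≤ deg H (e v) ↔ 2 ≤ deg G v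
    rw [e.deg_eq]))⟩

end Caterpillar

section Quotient

variable {V W X : Type*} {G : SimpleGraph V}

lemma quotientGraph_adj {c : V → W} {a b : W} :
    (quotientGraph G c).Adj a b ↔ a ≠ b ∧ ∃ u v, c u = a ∧ c v = b ∧ G.Adj u v :=
  Iff.rfl

lemma SimpleGraph.Walk.isDiag_map_of_mem_edges {c : V → W} {w : W} {u v : V} {q : G.Walk u v}
    (hq : ∀ x ∈ q.support, c x = w) {e : Sym2 V} (he : e ∈ q.edges) : (e.map c).IsDiag := by
  induction e with
  | h x y =>
    simp [hq x (q.fst_mem_support_of_mem_edges he), hq y (q.snd_mem_support_of_mem_edges he)]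

lemma SimpleGraph.Walk.exists_quotientGraph_length_le (c : V → W) {u v : V} (q : G.Walk u v) :
    ∃ p : (quotientGraph G c).Walk (c u) (c v), p.length ≤ q.length := by
  induction q with
  | nil => exact ⟨.nil, le_rfl⟩
  | @cons x y z h r ih =>
    obtain ⟨p, hp⟩ := ih
    by_cases he : c x = c y
    · exact ⟨p.copy he.symm rfl, by rw [Walk.length_copy, Walk.length_cons]; omega⟩
    · refine ⟨.cons (quotientGraph_adj.2 ⟨he, x, y, rfl, rfl, h⟩) p, ?_⟩
      rw [Walk.length_cons, Walk.length_cons]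
      omega

lemma SimpleGraph.Walk.exists_quotientGraph_support_eq (c : V → W) {u v : V} (q : G.Walk u v)
    (hc : Set.InjOn c {x | x ∈ q.support}) :
    ∃ p : (quotientGraph G c).Walk (c u) (c v), p.support = q.support.map c := by
  induction q with
  | nil => exact ⟨.nil, rfl⟩
  | @cons x y z h r ih =>
    obtain ⟨p, hp⟩ := ih (hc.mono fun a ha => List.mem_cons_of_mem _ ha)
    have he : c x ≠ c y := fun he => h.ne (hc (by simp) (by simp) he)
    refine ⟨.cons (quotientGraph_adj.2 ⟨he, x, y, rfl, rfl, h⟩) p, ?_⟩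
    rw [Walk.support_cons, Walk.support_cons, hp]
    rfl

lemma SimpleGraph.Connected.quotientGraph (hG : G.Connected) {c : V → W} (hc : Surjective c) :
    (quotientGraph G c).Connected := by
  have : Nonempty V := hG.nonempty
  have : Nonempty W := this.map c
  refine ⟨fun a b => ?_⟩
  obtain ⟨u, rfl⟩ := hc a
  obtain ⟨v, rfl⟩ := hc b
  obtain ⟨q⟩ := hG.preconnected u v
  exact (q.exists_quotientGraph_length_le c).elim fun p _ => p.reachable

lemma treeDiam_quotientGraph_le [Finite V] (hG : G.Connected) {c : V → W} (hc : Surjective c) :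
    treeDiam (quotientGraph G c) ≤ treeDiam G := by
  have : Nonempty V := hG.nonempty
  have : Nonempty W := this.map c
  refine treeDiam_le fun a b => ?_
  obtain ⟨u, rfl⟩ := hc a
  obtain ⟨v, rfl⟩ := hc b
  obtain ⟨q, -, hq⟩ := (hG.preconnected u v).exists_path_of_dist
  obtain ⟨p, hp⟩ := q.exists_quotientGraph_length_le c
  exact (dist_le p).trans (hp.trans (hq ▸ dist_le_treeDiam u v))

lemma quotientGraph_comp (c₁ : V → X) (c₂ : X → W) :
    quotientGraph G (c₂ ∘ c₁) = quotientGraph (quotientGraph G c₁) c₂ := by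
  ext a b
  constructor
  · rintro ⟨hab, u, v, rfl, rfl, h⟩
    exact ⟨hab, c₁ u, c₁ v, rfl, rfl, fun he => hab (congrArg c₂ he), u, v, rfl, rfl, h⟩
  · rintro ⟨hab, _, _, rfl, rfl, -, u, v, rfl, rfl, h⟩
    exact ⟨hab, u, v, rfl, rfl, h⟩

def quotientGraphIso (e : V ≃ W) (G : SimpleGraph V) : G ≃g quotientGraph G e where
  toEquiv := e
  map_rel_iff' := ⟨fun ⟨_, _, _, hu, hv, h⟩ => e.injective hu ▸ e.injective hv ▸ h,
    fun h => ⟨e.injective.ne h.ne, _, _, rfl, rfl, h⟩⟩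

def IsContraction (G : SimpleGraph V) (c : V → W) : Prop :=
  ∀ w, (G.induce (c ⁻¹' {w})).Connected

namespace IsContraction

variable {c : V → W}

lemma surjective (hc : IsContraction G c) : Surjective c := fun w =>
  let ⟨⟨v, hv⟩⟩ := (hc w).nonempty
  ⟨v, hv⟩

lemma of_bijective (hc : Bijective c) : IsContraction G c := fun w => by
  obtain ⟨v, rfl⟩ := hc.2 w
  rw [show c ⁻¹' {c v} = {v} from Set.ext fun _ => hc.1.eq_iff]
  exact connected_induce_singleton v

lemma exists_walk_of_eq (hc : IsContraction G c) {u v : V} (h : c u = c v) :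
    ∃ q : G.Walk u v, ∀ x ∈ q.support, c x = c u :=
  ((hc (c u)).preconnected ⟨u, rfl⟩ ⟨v, h.symm⟩).exists_walk_support_subset

lemma exists_walk_lift (hc : IsContraction G c) {a b : W} (p : (quotientGraph G c).Walk a b)
    {u v : V} (hu : c u = a) (hv : c v = b) :
    ∃ q : G.Walk u v, (∀ x ∈ q.support, c x ∈ p.support) ∧
      ∀ e ∈ q.edges, (e.map c).IsDiag ∨ e.map c ∈ p.edges := by
  induction p generalizing u with
  | nil =>
    obtain ⟨q, hq⟩ := hc.exists_walk_of_eq (hu.trans hv.symm)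
    exact ⟨q, fun x hx => by simp [hq x hx, hu],
      fun e he => Or.inl (Walk.isDiag_map_of_mem_edges hq he)⟩
  | cons h r ih =>
    obtain ⟨-, x, y, hx, hy, hxy⟩ := quotientGraph_adj.1 h
    obtain ⟨q₁, hq₁⟩ := hc.exists_walk_of_eq (hu.trans hx.symm)
    obtain ⟨q₂, hs₂, he₂⟩ := ih hy hv
    refine ⟨q₁.append (.cons hxy q₂), fun z hz => ?_, fun e he => ?_⟩
    · rw [Walk.mem_support_append_iff, Walk.support_cons, List.mem_cons] at hz
      rcases hz with hz | rfl | hz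
      · simp [hq₁ z hz, hu]
      · simp [hx]
      · exact List.mem_cons_of_mem _ (hs₂ z hz)
    · rw [Walk.edges_append, List.mem_append, Walk.edges_cons, List.mem_cons] at he
      rcases he with he | rfl | he
      · exact Or.inl (Walk.isDiag_map_of_mem_edges hq₁ he)
      · right
        rw [Walk.edges_cons]
        simp [hx, hy]
      · exact (he₂ e he).imp id (List.mem_cons_of_mem _)

lemma comp {c₁ : V → X} {c₂ : X → W} (hc₁ : IsContraction G c₁)
    (hc₂ : IsContraction (quotientGraph G c₁) c₂) : IsContraction G (c₂ ∘ c₁) := fun w => by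
  obtain ⟨⟨x, hx⟩⟩ := (hc₂ w).nonempty
  obtain ⟨u, rfl⟩ := hc₁.surjective x
  have : Nonempty ((c₂ ∘ c₁) ⁻¹' {w}) := ⟨⟨u, hx⟩⟩
  refine ⟨fun ⟨u, hu⟩ ⟨v, hv⟩ => ?_⟩
  obtain ⟨p, hp⟩ :=
    ((hc₂ w).preconnected ⟨c₁ u, hu⟩ ⟨c₁ v, hv⟩).exists_walk_support_subset
  obtain ⟨q, hq, -⟩ := hc₁.exists_walk_lift p rfl rfl
  exact ⟨q.induce _ fun z hz => hp _ (hq z hz)⟩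

lemma isAcyclic_quotientGraph (hc : IsContraction G c) (hA : G.IsAcyclic) :
    (quotientGraph G c).IsAcyclic := by
  rw [isAcyclic_iff_forall_adj_isBridge]
  rintro _ _ ⟨hab, x, y, rfl, rfl, hxy⟩
  rw [isBridge_iff_forall_walk_mem_edges]
  intro p
  obtain ⟨q, -, hq⟩ := hc.exists_walk_lift p rfl rfl
  have hbridge := isAcyclic_iff_forall_adj_isBridge.1 hA hxy
  rcases hq _ (isBridge_iff_forall_walk_mem_edges.1 hbridge q) with h | h
  · exact absurd (by simpa using h) hab
  · simpa using h

lemma isTree_quotientGraph (hc : IsContraction G c) (hG : G.IsTree) :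
    (quotientGraph G c).IsTree :=
  ⟨hG.connected.quotientGraph hc.surjective, hc.isAcyclic_quotientGraph hG.isAcyclic⟩

lemma eq_of_adj_of_adj (hc : IsContraction G c) (hA : G.IsAcyclic) {u₁ v₁ u₂ v₂ : V}
    (hne : c u₁ ≠ c v₁) (hu : c u₁ = c u₂) (hv : c v₁ = c v₂) (h₁ : G.Adj u₁ v₁)
    (h₂ : G.Adj u₂ v₂) : u₁ = u₂ ∧ v₁ = v₂ := by
  -- the bridge `u₁v₁` lies on the walk `u₁ ⇝ u₂ — v₂ ⇝ v₁` that stays inside the two fibres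
  obtain ⟨q₁, hq₁⟩ := hc.exists_walk_of_eq hu
  obtain ⟨q₂, hq₂⟩ := hc.exists_walk_of_eq hv.symm
  have hmem := isBridge_iff_forall_walk_mem_edges.1 (isAcyclic_iff_forall_adj_isBridge.1 hA h₁)
    (q₁.append (.cons h₂ q₂))
  rw [Walk.edges_append, List.mem_append, Walk.edges_cons, List.mem_cons] at hmem
  rcases hmem with h | h | h
  · exact absurd (by simpa using Walk.isDiag_map_of_mem_edges hq₁ h) hne
  · rcases Sym2.eq_iff.1 h with h | ⟨rfl, rfl⟩
    · exact h
    · exact absurd hu hne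
  · exact absurd (by simpa [hv] using Walk.isDiag_map_of_mem_edges hq₂ h) hne

lemma deg_quotientGraph (hc : IsContraction G c) (hA : G.IsAcyclic) {v : V}
    (hv : c ⁻¹' {c v} = {v}) : deg (quotientGraph G c) (c v) = deg G v := by
  have hne : ∀ z, G.Adj v z → c v ≠ c z := fun z hz h =>
    hz.ne (show z ∈ ({v} : Set V) from hv ▸ h.symm).symm
  have hN : (quotientGraph G c).neighborSet (c v) = c '' G.neighborSet v := by
    ext b
    constructor
    · rintro ⟨-, x, z, hx, rfl, hxz⟩
      obtain rfl : x = v := show x ∈ ({v} : Set V) from hv ▸ hx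
      exact ⟨z, hxz, rfl⟩
    · rintro ⟨z, hz, rfl⟩
      exact ⟨hne z hz, v, z, rfl, rfl, hz⟩
  rw [deg, deg, hN]
  exact Set.InjOn.ncard_image fun z₁ h₁ z₂ h₂ h =>
    (hc.eq_of_adj_of_adj hA (hne z₁ h₁) rfl h h₁ h₂).2

lemma exists_deg_eq_one [Finite V] (hc : IsContraction G c) (hA : G.IsAcyclic) {w : W}
    (hw : deg (quotientGraph G c) w = 1) : ∃ v, c v = w ∧ deg G v = 1 := by
  classical
  obtain ⟨b, hb⟩ := Set.ncard_eq_one.1 hw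
  have hout : ∀ x z, c x = w → G.Adj x z → c z ≠ w → c z = b := fun x z hx hxz hz =>
    show c z ∈ ({b} : Set W) from hb ▸ ⟨Ne.symm hz, x, z, hx, rfl, hxz⟩
  obtain ⟨⟨v, hv⟩⟩ := (hc w).nonempty
  by_cases hS : c ⁻¹' {w} = {v}
  · refine ⟨v, hv, ?_⟩
    rw [← hc.deg_quotientGraph hA (hv ▸ hS), hv, hw]
  -- the fibre induces a tree with two leaves, at most one of which has an edge leaving the fibre
  have : Nontrivial (c ⁻¹' {w}) := by
    obtain ⟨v', hv', hne⟩ : ∃ v' ∈ c ⁻¹' {w}, v' ≠ v := by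
      by_contra! h
      exact hS (Set.eq_singleton_iff_unique_mem.2 ⟨hv, h⟩)
    exact ⟨⟨v', hv'⟩, ⟨v, hv⟩, fun h => hne (congrArg Subtype.val h)⟩
  have := Fintype.ofFinite V
  obtain ⟨ℓ₁, ℓ₂, hne, h₁, h₂⟩ := IsTree.exists_ne_and_degree_eq_one ⟨hc w, hA.induce _⟩
  rw [← deg_eq_degree] at h₁ h₂
  by_cases hℓ₁ : G.neighborSet ℓ₁ ⊆ c ⁻¹' {w}
  · exact ⟨ℓ₁, ℓ₁.2, deg_induce_of_neighborSet_subset hℓ₁ ▸ h₁⟩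
  by_cases hℓ₂ : G.neighborSet ℓ₂ ⊆ c ⁻¹' {w}
  · exact ⟨ℓ₂, ℓ₂.2, deg_induce_of_neighborSet_subset hℓ₂ ▸ h₂⟩
  obtain ⟨z₁, hz₁, hz₁w⟩ := Set.not_subset.1 hℓ₁
  obtain ⟨z₂, hz₂, hz₂w⟩ := Set.not_subset.1 hℓ₂
  have hb₁ := hout _ _ ℓ₁.2 hz₁ hz₁w
  have hb₂ := hout _ _ ℓ₂.2 hz₂ hz₂w
  refine absurd (Subtype.ext ?_) hne
  exact (hc.eq_of_adj_of_adj hA (fun h => hz₁w (show c z₁ = w from h ▸ ℓ₁.2))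
    (ℓ₁.2.trans ℓ₂.2.symm) (hb₁.trans hb₂.symm) hz₁ hz₂).1

lemma leafCount_quotientGraph_le [Finite V] (hc : IsContraction G c) (hA : G.IsAcyclic) :
    leafCount (quotientGraph G c) ≤ leafCount G :=
  calc leafCount (quotientGraph G c) ≤ (c '' {v | deg G v = 1}).ncard :=
        Set.ncard_le_ncard (fun _ hw => let ⟨v, hv, h⟩ := hc.exists_deg_eq_one hA hw; ⟨v, h, hv⟩)
          ((Set.toFinite _).image c)
    _ ≤ leafCount G := Set.ncard_image_le (Set.toFinite _)

lemma leafCount_le_quotientGraph [Finite W] (hc : IsContraction G c) (hA : G.IsAcyclic)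
    (h : ∀ v, deg G v = 1 → c ⁻¹' {c v} = {v}) : leafCount G ≤ leafCount (quotientGraph G c) :=
  Set.ncard_le_ncard_of_injOn c
    (fun v (hv : deg G v = 1) => show _ = 1 from hc.deg_quotientGraph hA (h v hv) ▸ hv)
    (fun v₁ _ v₂ h₂ he => show v₁ ∈ ({v₂} : Set V) from h v₂ h₂ ▸ he) (Set.toFinite _)

end IsContraction

end Quotient

section ContractEdge

variable {V : Type*} [DecidableEq V] {G : SimpleGraph V} {x y : V}

def contractEdge (h : x ≠ y) (z : V) : ({y}ᶜ : Set V) :=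
  if hz : z = y then ⟨x, Set.mem_compl_singleton_iff.2 h⟩
  else ⟨z, Set.mem_compl_singleton_iff.2 hz⟩

lemma coe_contractEdge (h : x ≠ y) (z : V) :
    (contractEdge h z : V) = if z = y then x else z := by
  unfold contractEdge
  split_ifs <;> rfl

lemma contractEdge_injOn (h : x ≠ y) : Set.InjOn (contractEdge h) {y}ᶜ := fun z₁ h₁ z₂ h₂ he => by
  simpa [Subtype.ext_iff, coe_contractEdge, Set.mem_compl_singleton_iff.1 h₁,
    Set.mem_compl_singleton_iff.1 h₂] using he

lemma mem_preimage_contractEdge (h : x ≠ y) {t : V} {w : ({y}ᶜ : Set V)} :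
    t ∈ contractEdge h ⁻¹' {w} ↔ (if t = y then x else t) = w := by
  rw [Set.mem_preimage, Set.mem_singleton_iff, Subtype.ext_iff, coe_contractEdge]

lemma preimage_contractEdge_of_ne (h : x ≠ y) {z : V} (hzx : z ≠ x) (hzy : z ≠ y) :
    contractEdge h ⁻¹' {contractEdge h z} = {z} := by
  ext t
  rw [mem_preimage_contractEdge, coe_contractEdge, if_neg hzy, Set.mem_singleton_iff]
  split_ifs with hty
  · exact iff_of_false (Ne.symm hzx) (hty ▸ Ne.symm hzy)
  · exact Iff.rfl

lemma isContraction_contractEdge (hxy : G.Adj x y) : IsContraction G (contractEdge hxy.ne) := by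
  rintro ⟨z, hz⟩
  have hzy : z ≠ y := hz
  by_cases hzx : z = x
  · subst hzx
    have hfib : contractEdge hxy.ne ⁻¹' {⟨z, hz⟩} = {z, y} := by
      ext t
      rw [mem_preimage_contractEdge]
      split_ifs with hty <;> simp [hty]
    rw [hfib]
    exact induce_pair_connected_of_adj hxy
  · have hw : (⟨z, hz⟩ : ({y}ᶜ : Set V)) = contractEdge hxy.ne z :=
      Subtype.ext (by rw [coe_contractEdge, if_neg hzy])
    rw [hw, preimage_contractEdge_of_ne hxy.ne hzx hzy]
    exact connected_induce_singleton z

end ContractEdge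

section Step

variable {V : Type*} {G : SimpleGraph V}

lemma SimpleGraph.IsAcyclic.eq_or_eq_or_eq_of_adj_of_mem_support (hA : G.IsAcyclic) {u v w : V}
    {p : G.Walk u v} (hp : p.IsPath) (hw : w ∈ p.support) {a b d : V} (ha : G.Adj w a)
    (hb : G.Adj w b) (hd : G.Adj w d) (hap : a ∈ p.support) (hbp : b ∈ p.support)
    (hdp : d ∈ p.support) : a = b ∨ a = d ∨ b = d := by
  classical
  -- a neighbour of `w` on `p` follows `w` on one of the two halves of `p` split at `w`
  have key : ∀ z, G.Adj w z → z ∈ p.support →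
      z = (p.dropUntil w hw).snd ∨ z = (p.takeUntil w hw).reverse.snd := fun z hz hzp => by
    rw [← p.take_spec hw, Walk.mem_support_append_iff] at hzp
    rcases hzp with h | h
    · exact Or.inr (hA.eq_snd_of_adj_start (hp.takeUntil hw).reverse hz (by simpa using h))
    · exact Or.inl (hA.eq_snd_of_adj_start (hp.dropUntil hw) hz h)
  rcases key a ha hap with h₁ | h₁ <;> rcases key b hb hbp with h₂ | h₂ <;>
    rcases key d hd hdp with h₃ | h₃ <;> simp_all

lemma SimpleGraph.IsTree.exists_adj_spine_not_mem_support [Finite V] (hG : G.IsTree)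
    (hnc : ¬ IsCaterpillar G) {u v : V} {p : G.Walk u v} (hp : p.IsPath) :
    ∃ x y, G.Adj x y ∧ x ∈ G.spine ∧ y ∈ G.spine ∧ y ∉ p.support := by
  -- the spine of a tree induces an acyclic preconnected graph, so some degree exceeds two
  have hdeg : ¬ ∀ w a b d : G.spine, (G.induce G.spine).Adj w a → (G.induce G.spine).Adj w b →
      (G.induce G.spine).Adj w d → a = b ∨ a = d ∨ b = d := fun h =>
    hnc ⟨hG, hG.isAcyclic.induce _, hG.connected.preconnected.induce_of_degree_eq_one
      fun v hv => (Set.ncard_le_one (Set.toFinite _)).1 (Nat.le_of_lt_succ (not_le.1 hv)), h⟩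
  push Not at hdeg
  obtain ⟨⟨w, hw⟩, ⟨a, ha⟩, ⟨b, hb⟩, ⟨d, hd⟩, hwa, hwb, hwd, hab, had, hbd⟩ := hdeg
  by_contra! hall
  rcases hG.isAcyclic.eq_or_eq_or_eq_of_adj_of_mem_support hp (hall a w hwa.symm ha hw) hwa hwb
    hwd (hall w a hwa hw ha) (hall w b hwb hw hb) (hall w d hwd hw hd) with h | h | h
  · exact hab (Subtype.ext h)
  · exact had (Subtype.ext h)
  · exact hbd (Subtype.ext h)

lemma SimpleGraph.IsTree.exists_isContraction_kappa_eq [Finite V] (hG : G.IsTree)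
    (hnc : ¬ IsCaterpillar G) :
    ∃ (y : V) (c : V → ({y}ᶜ : Set V)), IsContraction G c ∧
      kappa (quotientGraph G c) = kappa G := by
  classical
  have : Nonempty V := hG.connected.nonempty
  have hA := hG.isAcyclic
  obtain ⟨u, v, huv⟩ := exists_dist_eq_treeDiam (G := G)
  obtain ⟨p, hp, hlen⟩ := (hG.connected.preconnected u v).exists_path_of_dist
  obtain ⟨x, y, hxy, hx, hy, hyp⟩ := hG.exists_adj_spine_not_mem_support hnc hp
  have hc := isContraction_contractEdge hxy
  have hleaf : leafCount (quotientGraph G (contractEdge hxy.ne)) = leafCount G := by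
    refine le_antisymm (hc.leafCount_quotientGraph_le hA)
      (hc.leafCount_le_quotientGraph hA fun z hz => preimage_contractEdge_of_ne _ ?_ ?_)
    · rintro rfl
      exact absurd hx (by simp [spine, hz])
    · rintro rfl
      exact absurd hy (by simp [spine, hz])
  have hdiam : treeDiam (quotientGraph G (contractEdge hxy.ne)) = treeDiam G := by
    refine le_antisymm (treeDiam_quotientGraph_le hG.connected hc.surjective) ?_
    have hinj : Set.InjOn (contractEdge hxy.ne) {z | z ∈ p.support} :=
      (contractEdge_injOn hxy.ne).mono fun z hz => ne_of_mem_of_not_mem hz hyp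
    obtain ⟨q, hq⟩ := p.exists_quotientGraph_support_eq _ hinj
    have hqp : q.IsPath := by
      rw [Walk.isPath_def, hq]
      exact hp.support_nodup.map_on fun a ha b hb => hinj ha hb
    calc treeDiam G = q.length := by
          have := congrArg List.length hq
          rw [List.length_map, Walk.length_support, Walk.length_support] at this
          omega
      _ = _ := ((hc.isAcyclic_quotientGraph hA).dist_eq_length hqp).symm
      _ ≤ _ := dist_le_treeDiam _ _
  exact ⟨y, _, hc, by rw [kappa, kappa, hleaf, hdiam]⟩

lemma IsContraction.edgeCount_le_kappa [Finite V] {W : Type*} [Finite W] {c : V → W}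
    (hc : IsContraction G c) (hG : G.IsTree) (hcat : IsCaterpillar (quotientGraph G c)) :
    edgeCount (quotientGraph G c) ≤ kappa G := by
  have := hc.leafCount_quotientGraph_le hG.isAcyclic
  have := treeDiam_quotientGraph_le hG.connected hc.surjective
  rw [hcat.edgeCount_eq_kappa, kappa, kappa]
  omega

theorem SimpleGraph.IsTree.exists_isContraction_isCaterpillar [Finite V] (hG : G.IsTree) :
    ∃ (W : Type) (_ : Fintype W) (c : V → W), IsContraction G c ∧
      IsCaterpillar (quotientGraph G c) ∧ edgeCount (quotientGraph G c) = kappa G := by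
  induction h : Nat.card V using Nat.strong_induction_on generalizing V with
  | _ n ih =>
  by_cases hcat : IsCaterpillar G
  · let e := Finite.equivFin V
    exact ⟨_, inferInstance, e, .of_bijective e.bijective, hcat.of_iso (quotientGraphIso e G),
      by rw [(quotientGraphIso e G).edgeCount_eq, hcat.edgeCount_eq_kappa]⟩
  obtain ⟨y, c₁, hc₁, hκ⟩ := hG.exists_isContraction_kappa_eq hcat
  have hcard : Nat.card ({y}ᶜ : Set V) < n := by
    have : Nonempty V := hG.connected.nonempty
    have : 0 < Nat.card V := Nat.card_pos
    rw [Nat.card_coe_set_eq, Set.ncard_compl, Set.ncard_singleton]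
    omega
  obtain ⟨W, _, c₂, hc₂, hcat₂, hedge₂⟩ := ih _ hcard (hc₁.isTree_quotientGraph hG) rfl
  exact ⟨W, ‹_›, c₂ ∘ c₁, hc₁.comp hc₂, by rwa [quotientGraph_comp],
    by rw [quotientGraph_comp, hedge₂, hκ]⟩

end Step

theorem max_contraction_caterpillar_eq_kappa_general
    {V : Type*} [Fintype V] (G : SimpleGraph V) (hG : G.IsTree) :
    IsGreatest {k : ℕ | ∃ (W : Type) (_ : Fintype W) (c : V → W),
        Function.Surjective c ∧
        (∀ w : W, (G.induce (c ⁻¹' {w})).Connected) ∧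
        IsCaterpillar (quotientGraph G c) ∧
        edgeCount (quotientGraph G c) = k}
      (kappa G) := by
  refine ⟨?_, ?_⟩
  · obtain ⟨W, _, c, hc, hcat, hk⟩ := hG.exists_isContraction_isCaterpillar
    exact ⟨W, ‹_›, c, hc.surjective, hc, hcat, hk⟩
  · rintro _ ⟨W, _, c, -, hc, hcat, rfl⟩
    exact IsContraction.edgeCount_le_kappa hc hG hcat

/-- For every finite tree `T` with at least one edge, the maximum number of
edges of a caterpillar obtainable from `T` by contracting edges (i.e., as a quotient by a
partition of the vertex set into nonempty connected parts) equals `κ(T)`, the number of leaves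
plus the diameter minus 2. -/
theorem max_contraction_caterpillar_eq_kappa
    {V : Type*} [Fintype V] (G : SimpleGraph V) (hG : G.IsTree) (hE : 1 ≤ edgeCount G) :
    IsGreatest {k : ℕ | ∃ (W : Type) (_ : Fintype W) (c : V → W),
        Function.Surjective c ∧
        (∀ w : W, (G.induce (c ⁻¹' {w})).Connected) ∧
        IsCaterpillar (quotientGraph G c) ∧
        edgeCount (quotientGraph G c) = k}
      (kappa G) :=
  max_contraction_caterpillar_eq_kappa_general G hG
end

section
/- For all integers d ≥ 2 and l ≥ 2 there exists a spider with diameter exactly d, exactly l leaves, and exactly e(d,l) edges, where e(d,l) = d·l/2 if d is even and e(d,l) = (d − 1)·l/2 + 1 if d is odd. -/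
/-!
Take the spider with one leg of length `⌈d/2⌉` and `l - 1` legs of length `⌊d/2⌋`. Its leaves
are the `l` leg tips and it has `⌈d/2⌉ + (l - 1)⌊d/2⌋` edges. Its diameter is the sum `d` of the
two longest legs: any two vertices are joined through the centre, and conversely the signed depth
(depth on one leg, minus depth on the others) changes by at most one along an edge, so the tips
of two different legs are at distance at least the sum of their depths. Being a tree follows from
connectivity together with `#edges + 1 = #vertices`.
-/

open SimpleGraph

namespace SimpleGraph

variable {V : Type*} {G : SimpleGraph V} {u v : V}

lemma Walk.abs_sub_le_length (f : V → ℤ) (hf : ∀ a b, G.Adj a b → |f a - f b| ≤ 1)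
    (w : G.Walk u v) : |f u - f v| ≤ w.length := by
  induction w with
  | nil => simp
  | @cons a b c h p ih =>
    calc |f a - f c| ≤ |f a - f b| + |f b - f c| := abs_sub_le _ _ _
      _ ≤ 1 + p.length := add_le_add (hf a b h) ih
      _ = (cons h p).length := by simp [add_comm]

lemma Reachable.abs_sub_le_dist (h : G.Reachable u v) (f : V → ℤ)
    (hf : ∀ a b, G.Adj a b → |f a - f b| ≤ 1) : |f u - f v| ≤ G.dist u v := by
  obtain ⟨w, hw⟩ := h.exists_walk_length_eq_dist
  simpa [hw] using w.abs_sub_le_length f hf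

end SimpleGraph

lemma treeDiam_eq_of_dist_le {V : Type*} {G : SimpleGraph V} {D : ℕ}
    (hle : ∀ u v, G.dist u v ≤ D) {u v : V} (huv : D ≤ G.dist u v) : treeDiam G = D :=
  IsGreatest.csSup_eq ⟨⟨u, v, le_antisymm (hle u v) huv⟩, by rintro _ ⟨u, v, rfl⟩; exact hle u v⟩

namespace Spider

variable {ι : Type*} {L : ι → ℕ}

/-- `none` is the centre; `some ⟨i, k⟩` is the vertex at distance `k + 1` from it on leg `i`. -/
abbrev Vertex (L : ι → ℕ) : Type _ := Option (Σ i, Fin (L i))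

lemma sigma_ext_iff {x y : Σ i, Fin (L i)} : x = y ↔ x.1 = y.1 ∧ (x.2 : ℕ) = y.2 := by
  obtain ⟨i, k⟩ := x
  obtain ⟨j, m⟩ := y
  constructor
  · rintro ⟨⟩
    exact ⟨rfl, rfl⟩
  · rintro ⟨rfl, h⟩
    exact Sigma.ext rfl (heq_of_eq (Fin.ext h))

def depth : Vertex L → ℕ
  | none => 0
  | some x => x.2 + 1

def parent : (Σ i, Fin (L i)) → Vertex L
  | ⟨_, ⟨0, _⟩⟩ => none
  | ⟨i, ⟨k + 1, hk⟩⟩ => some ⟨i, ⟨k, by omega⟩⟩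

lemma depth_parent (x : Σ i, Fin (L i)) : depth (parent x) = x.2 := by
  obtain ⟨i, ⟨_ | k, hk⟩⟩ := x <;> rfl

lemma parent_eq_none_iff {y : Σ i, Fin (L i)} : parent y = none ↔ (y.2 : ℕ) = 0 := by
  obtain ⟨i, ⟨_ | k, hk⟩⟩ := y <;> simp [parent]

lemma parent_eq_some_iff {x y : Σ i, Fin (L i)} :
    parent y = some x ↔ y.1 = x.1 ∧ (y.2 : ℕ) = x.2 + 1 := by
  obtain ⟨i, ⟨_ | k, hk⟩⟩ := y <;> simp [parent, sigma_ext_iff]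

def graph (L : ι → ℕ) : SimpleGraph (Vertex L) where
  Adj u v := (∃ x, u = some x ∧ v = parent x) ∨ (∃ x, v = some x ∧ u = parent x)
  symm := ⟨fun _ _ ↦ Or.symm⟩
  loopless := ⟨by
    rintro _ (⟨x, rfl, h⟩ | ⟨x, rfl, h⟩) <;>
    · have h := congrArg depth h
      rw [depth_parent] at h
      simp [depth] at h⟩

lemma adj_parent (x : Σ i, Fin (L i)) : (graph L).Adj (some x) (parent x) :=
  Or.inl ⟨x, rfl, rfl⟩

lemma adj_none_iff {v : Vertex L} :
    (graph L).Adj none v ↔ ∃ y : Σ i, Fin (L i), v = some y ∧ (y.2 : ℕ) = 0 := by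
  constructor
  · rintro (⟨x, ⟨⟩, _⟩ | ⟨x, rfl, hp⟩)
    exact ⟨x, rfl, parent_eq_none_iff.mp hp.symm⟩
  · rintro ⟨y, rfl, h0⟩
    exact Or.inr ⟨y, rfl, (parent_eq_none_iff.mpr h0).symm⟩

lemma adj_some_iff {x : Σ i, Fin (L i)} {v : Vertex L} :
    (graph L).Adj (some x) v ↔
      v = parent x ∨ ∃ y : Σ i, Fin (L i), v = some y ∧ y.1 = x.1 ∧ (y.2 : ℕ) = x.2 + 1 := by
  constructor
  · rintro (⟨z, ⟨⟩, rfl⟩ | ⟨y, rfl, hp⟩)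
    · exact Or.inl rfl
    · exact Or.inr ⟨y, rfl, parent_eq_some_iff.mp hp.symm⟩
  · rintro (rfl | ⟨y, rfl, h⟩)
    · exact adj_parent x
    · exact Or.inr ⟨y, rfl, (parent_eq_some_iff.mpr h).symm⟩

lemma exists_walk_to_none : ∀ v : Vertex L, ∃ w : (graph L).Walk v none, w.length = depth v
  | none => ⟨.nil, rfl⟩
  | some ⟨i, ⟨k, hk⟩⟩ => by
    induction k with
    | zero => exact ⟨.cons (adj_parent ⟨i, ⟨0, hk⟩⟩) .nil, rfl⟩
    | succ k ih =>
      obtain ⟨w, hw⟩ := ih (by omega)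
      exact ⟨.cons (adj_parent ⟨i, ⟨k + 1, hk⟩⟩) w, congrArg (· + 1) hw⟩

lemma dist_le_depth_add_depth (u v : Vertex L) :
    (graph L).dist u v ≤ depth u + depth v := by
  obtain ⟨wu, hu⟩ := exists_walk_to_none u
  obtain ⟨wv, hv⟩ := exists_walk_to_none v
  simpa [hu, hv] using dist_le (wu.append wv.reverse)

lemma connected : (graph L).Connected := by
  refine (connected_iff _).mpr ⟨fun u v ↦ ?_, ⟨none⟩⟩
  obtain ⟨wu, -⟩ := exists_walk_to_none u
  obtain ⟨wv, -⟩ := exists_walk_to_none v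
  exact (wu.append wv.reverse).reachable

lemma card_edgeSet : Nat.card (graph L).edgeSet = Nat.card (Σ i, Fin (L i)) := by
  refine (Nat.card_eq_of_bijective (fun x ↦ ⟨s(some x, parent x), adj_parent x⟩) ⟨?_, ?_⟩).symm
  · intro x y h
    rcases Sym2.eq_iff.mp (congrArg Subtype.val h) with ⟨h, -⟩ | ⟨h₁, h₂⟩
    · exact Option.some.inj h
    · have h₁ := congrArg depth h₁
      have h₂ := congrArg depth h₂
      rw [depth_parent] at h₁ h₂
      simp only [depth] at h₁ h₂
      omega
  · rintro ⟨e, he⟩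
    revert he
    refine Sym2.ind (fun u v he ↦ ?_) e
    rcases (mem_edgeSet _).mp he with ⟨x, rfl, rfl⟩ | ⟨x, rfl, rfl⟩
    · exact ⟨x, rfl⟩
    · exact ⟨x, Subtype.ext Sym2.eq_swap⟩

lemma edgeCount_graph [Fintype ι] : edgeCount (graph L) = ∑ i, L i := by
  rw [edgeCount, ← Nat.card_coe_set_eq, card_edgeSet, Nat.card_sigma]
  simp

lemma isTree [Finite ι] : (graph L).IsTree := by
  rw [isTree_iff_connected_and_card, card_edgeSet, Finite.card_option]
  exact ⟨connected, rfl⟩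

lemma deg_none (hpos : ∀ i, 0 < L i) : deg (graph L) none = Nat.card ι := by
  have : (graph L).neighborSet none = Set.range fun i ↦ some ⟨i, ⟨0, hpos i⟩⟩ := by
    ext v
    simp only [mem_neighborSet, adj_none_iff, Set.mem_range]
    constructor
    · rintro ⟨⟨i, k⟩, rfl, hk⟩
      exact ⟨i, congrArg some (sigma_ext_iff.mpr ⟨rfl, hk.symm⟩)⟩
    · rintro ⟨i, rfl⟩
      exact ⟨_, rfl, rfl⟩
  rw [deg, this, Set.ncard_range_of_injective]
  exact fun i j h ↦ (sigma_ext_iff.mp (Option.some.inj h)).1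

lemma deg_some (i : ι) (k : Fin (L i)) :
    deg (graph L) (some ⟨i, k⟩) = if (k : ℕ) + 1 = L i then 1 else 2 := by
  split_ifs with htip
  · have : (graph L).neighborSet (some ⟨i, k⟩) = {parent ⟨i, k⟩} := by
      ext v
      simp only [mem_neighborSet, adj_some_iff, Set.mem_singleton_iff, or_iff_left_iff_imp]
      rintro ⟨⟨j, m⟩, rfl, rfl, hm⟩
      have := m.isLt
      omega
    rw [deg, this, Set.ncard_singleton]
  · have hk : (k : ℕ) + 1 < L i := by omega
    have : (graph L).neighborSet (some ⟨i, k⟩) = {parent ⟨i, k⟩, some ⟨i, ⟨k + 1, hk⟩⟩} := by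
      ext v
      simp only [mem_neighborSet, adj_some_iff, Set.mem_insert_iff, Set.mem_singleton_iff]
      refine or_congr_right ⟨?_, ?_⟩
      · rintro ⟨y, rfl, h⟩
        simp [sigma_ext_iff, h]
      · rintro rfl
        exact ⟨_, rfl, rfl, rfl⟩
    rw [deg, this, Set.ncard_pair]
    intro h
    have h := congrArg depth h
    rw [depth_parent] at h
    simp only [depth] at h
    omega

lemma isSpider [Finite ι] : IsSpider (graph L) := by
  have : ∀ v, 3 ≤ deg (graph L) v → v = none := by
    rintro (_ | ⟨i, k⟩) h
    · rfl
    · rw [deg_some] at h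
      split_ifs at h <;> omega
  exact ⟨isTree, fun u v hu hv ↦ (this u hu).trans (this v hv).symm⟩

lemma leafCount_graph (hpos : ∀ i, 0 < L i) (hι : Nat.card ι ≠ 1) :
    leafCount (graph L) = Nat.card ι := by
  have : {v | deg (graph L) v = 1} =
      Set.range fun i ↦ some ⟨i, ⟨L i - 1, Nat.sub_one_lt (hpos i).ne'⟩⟩ := by
    ext (_ | ⟨i, k⟩)
    · simp [deg_none hpos, hι]
    · simp only [Set.mem_ofPred_eq, deg_some, Set.mem_range, Option.some.injEq, sigma_ext_iff,
        exists_eq_left]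
      have := hpos i
      split_ifs <;> omega
  rw [leafCount, this, Set.ncard_range_of_injective]
  exact fun i j h ↦ (sigma_ext_iff.mp (Option.some.inj h)).1

/-- `hleg` handles two vertices of one leg, which are joined here through the centre. -/
lemma dist_le_of_legs {D : ℕ} (hpair : ∀ i j, i ≠ j → L i + L j ≤ D)
    (hleg : ∀ i, 2 * L i ≤ D + 1) (u v : Vertex L) : (graph L).dist u v ≤ D := by
  rcases eq_or_ne u v with rfl | huv
  · simp
  refine (dist_le_depth_add_depth u v).trans ?_
  rcases u with _ | ⟨i, a⟩ <;> rcases v with _ | ⟨j, b⟩ <;> simp only [depth]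
  · contradiction
  · have := b.isLt
    have := hleg j
    omega
  · have := a.isLt
    have := hleg i
    omega
  · have := a.isLt
    have := b.isLt
    rcases eq_or_ne i j with rfl | hij
    · have : (a : ℕ) ≠ b := fun h ↦ huv (congrArg some (sigma_ext_iff.mpr ⟨rfl, h⟩))
      have := hleg i
      omega
    · have := hpair i j hij
      omega

def signedDepth [DecidableEq ι] (i : ι) : Vertex L → ℤ
  | none => 0
  | some x => if x.1 = i then x.2 + 1 else -(x.2 + 1 : ℤ)

lemma abs_signedDepth_sub_le [DecidableEq ι] (i : ι) {u v : Vertex L} (h : (graph L).Adj u v) :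
    |signedDepth i u - signedDepth i v| ≤ 1 := by
  have key (x : Σ i, Fin (L i)) : |signedDepth i (some x) - signedDepth i (parent x)| ≤ 1 := by
    obtain ⟨j, ⟨_ | k, hk⟩⟩ := x <;> simp only [parent, signedDepth] <;> split_ifs <;>
      rw [abs_le] <;> constructor <;> push_cast <;> omega
  rcases h with ⟨x, rfl, rfl⟩ | ⟨x, rfl, rfl⟩
  · exact key x
  · rw [abs_sub_comm]
    exact key x

lemma le_dist_of_ne {i j : ι} (hij : i ≠ j) (a : Fin (L i)) (b : Fin (L j)) :
    (a : ℕ) + b + 2 ≤ (graph L).dist (some ⟨i, a⟩) (some ⟨j, b⟩) := by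
  classical
  have := (connected.preconnected (some ⟨i, a⟩) (some ⟨j, b⟩)).abs_sub_le_dist (signedDepth i)
    fun _ _ ↦ abs_signedDepth_sub_le i
  simp only [signedDepth, if_pos, if_neg hij.symm, sub_neg_eq_add] at this
  rw [abs_of_nonneg (by positivity)] at this
  omega

lemma treeDiam_graph (hpos : ∀ i, 0 < L i) {D : ℕ} (hpair : ∀ i j, i ≠ j → L i + L j ≤ D)
    (hleg : ∀ i, 2 * L i ≤ D + 1) {i j : ι} (hij : i ≠ j) (hD : L i + L j = D) :
    treeDiam (graph L) = D := by
  refine treeDiam_eq_of_dist_le (dist_le_of_legs hpair hleg) (le_trans ?_ <|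
    le_dist_of_ne hij ⟨L i - 1, Nat.sub_one_lt (hpos i).ne'⟩ ⟨L j - 1, Nat.sub_one_lt (hpos j).ne'⟩)
  have := hpos i
  have := hpos j
  simp only
  omega

end Spider

lemma ceilHalf_add_mul_floorHalf (d n : ℕ) :
    (d + 1) / 2 + n * (d / 2) =
      if Even d then d * (n + 1) / 2 else (d - 1) * (n + 1) / 2 + 1 := by
  obtain ⟨m, rfl | rfl⟩ := Nat.even_or_odd' d
  · rw [if_pos (even_two_mul m), mul_assoc, Nat.mul_div_cancel_left _ two_pos,
      Nat.mul_div_cancel_left _ two_pos, show (2 * m + 1) / 2 = m by omega]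
    ring
  · rw [if_neg (Nat.not_even_iff_odd.mpr (odd_two_mul_add_one m)), Nat.add_sub_cancel, mul_assoc,
      Nat.mul_div_cancel_left _ two_pos, show (2 * m + 1 + 1) / 2 = m + 1 by omega,
      show (2 * m + 1) / 2 = m by omega]
    ring

/-- For all `d ≥ 2` and `l ≥ 2` there exists a spider with diameter exactly
`d`, exactly `l` leaves, and exactly `e(d,l)` edges, where `e(d,l) = d·l/2` if `d` is even
and `e(d,l) = (d − 1)·l/2 + 1` if `d` is odd. -/
theorem exists_extremal_spider (d l : ℕ) (hd : 2 ≤ d) (hl : 2 ≤ l) :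
    ∃ (V : Type) (_ : Fintype V) (G : SimpleGraph V),
      IsSpider G ∧ treeDiam G = d ∧ leafCount G = l ∧
      edgeCount G = (if Even d then d * l / 2 else (d - 1) * l / 2 + 1) := by
  obtain ⟨n, rfl⟩ : ∃ n, l = n + 2 := ⟨l - 2, by omega⟩
  set L : Fin (n + 2) → ℕ := Fin.cons ((d + 1) / 2) fun _ ↦ d / 2 with hL
  have hpos : ∀ i, 0 < L i := Fin.cases (by simp [L]; omega) (by simp [L]; omega)
  have hleg : ∀ i, 2 * L i ≤ d + 1 := Fin.cases (by simp [L]; omega) (by simp [L]; omega)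
  have hpair : ∀ i j, i ≠ j → L i + L j ≤ d := by
    intro i j hij
    cases i using Fin.cases <;> cases j using Fin.cases <;> simp_all [L] <;> omega
  refine ⟨Spider.Vertex L, inferInstance, Spider.graph L, Spider.isSpider, ?_, ?_, ?_⟩
  · exact Spider.treeDiam_graph hpos hpair hleg (Fin.succ_ne_zero 0).symm (by simp [L]; omega)
  · simpa using Spider.leafCount_graph hpos (by simp)
  · rw [Spider.edgeCount_graph, hL, Fin.sum_cons]
    simpa using ceilHalf_add_mul_floorHalf d (n + 1)
end

section
/- Let f be defined on positive integers by f(1) = 1 and f(k) = max{ c·f(k − c) + 1 : 1 ≤ c ≤ k − 1 } for k ≥ 2. Then f(2) = 2, f(3) = 3, f(4) = 5, f(5) = 7, and for every integer i ≥ 2: f(3i) = (23·3^(i−2) − 1)/2, f(3i + 1) = (33·3^(i−2) − 1)/2, and f(3i + 2) = (47·3^(i−2) − 1)/2. -/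
/-- `f` is the integer sequence defined by `f 1 = 1` and, for `k ≥ 2`,
`f k = max { c * f (k - c) + 1 : 1 ≤ c ≤ k - 1 }`. -/
def fSpec (f : ℕ → ℕ) : Prop :=
  f 1 = 1 ∧ ∀ k : ℕ, 2 ≤ k →
    IsGreatest {n : ℕ | ∃ c : ℕ, 1 ≤ c ∧ c ≤ k - 1 ∧ n = c * f (k - c) + 1} (f k)

lemma f_ub {f : ℕ → ℕ} (hf : fSpec f) {k c : ℕ} (hk : 2 ≤ k) (hc1 : 1 ≤ c)
    (hc2 : c ≤ k - 1) : c * f (k - c) + 1 ≤ f k :=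
  (hf.2 k hk).2 ⟨c, hc1, hc2, rfl⟩

lemma f_mem {f : ℕ → ℕ} (hf : fSpec f) {k : ℕ} (hk : 2 ≤ k) :
    ∃ c : ℕ, 1 ≤ c ∧ c ≤ k - 1 ∧ f k = c * f (k - c) + 1 :=
  (hf.2 k hk).1

lemma fA {f : ℕ → ℕ} (hf : fSpec f) {m c : ℕ} (hm : 1 ≤ m) (hc : 1 ≤ c) :
    c * f m + 1 ≤ f (m + c) := by
  have h := f_ub hf (k := m + c) (c := c) (by omega) hc (by omega)
  simpa using h

lemma fv2 {f : ℕ → ℕ} (hf : fSpec f) : f 2 = 2 := by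
  obtain ⟨c, h1, h2, he⟩ := f_mem hf (show (2:ℕ) ≤ 2 by norm_num)
  interval_cases c
  · norm_num [hf.1] at he; omega

lemma fv3 {f : ℕ → ℕ} (hf : fSpec f) : f 3 = 3 := by
  obtain ⟨c, h1, h2, he⟩ := f_mem hf (show (2:ℕ) ≤ 3 by norm_num)
  interval_cases c <;> norm_num [hf.1, fv2 hf] at he <;> omega

lemma fv4 {f : ℕ → ℕ} (hf : fSpec f) : f 4 = 5 := by
  have lb := f_ub hf (k := 4) (c := 2) (by norm_num) (by norm_num) (by norm_num)
  norm_num [fv2 hf] at lb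
  obtain ⟨c, h1, h2, he⟩ := f_mem hf (show (2:ℕ) ≤ 4 by norm_num)
  interval_cases c <;> norm_num [hf.1, fv2 hf, fv3 hf] at he <;> omega

lemma fv5 {f : ℕ → ℕ} (hf : fSpec f) : f 5 = 7 := by
  have lb := f_ub hf (k := 5) (c := 2) (by norm_num) (by norm_num) (by norm_num)
  norm_num [fv3 hf] at lb
  obtain ⟨c, h1, h2, he⟩ := f_mem hf (show (2:ℕ) ≤ 5 by norm_num)
  interval_cases c <;> norm_num [hf.1, fv2 hf, fv3 hf, fv4 hf] at he <;> omega

lemma fv6 {f : ℕ → ℕ} (hf : fSpec f) : f 6 = 11 := by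
  have lb := f_ub hf (k := 6) (c := 2) (by norm_num) (by norm_num) (by norm_num)
  norm_num [fv4 hf] at lb
  obtain ⟨c, h1, h2, he⟩ := f_mem hf (show (2:ℕ) ≤ 6 by norm_num)
  interval_cases c <;> norm_num [hf.1, fv2 hf, fv3 hf, fv4 hf, fv5 hf] at he <;> omega

lemma fv7 {f : ℕ → ℕ} (hf : fSpec f) : f 7 = 16 := by
  have lb := f_ub hf (k := 7) (c := 3) (by norm_num) (by norm_num) (by norm_num)
  norm_num [fv4 hf] at lb
  obtain ⟨c, h1, h2, he⟩ := f_mem hf (show (2:ℕ) ≤ 7 by norm_num)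
  interval_cases c <;>
    norm_num [hf.1, fv2 hf, fv3 hf, fv4 hf, fv5 hf, fv6 hf] at he <;> omega

lemma fv8 {f : ℕ → ℕ} (hf : fSpec f) : f 8 = 23 := by
  have lb := f_ub hf (k := 8) (c := 2) (by norm_num) (by norm_num) (by norm_num)
  norm_num [fv6 hf] at lb
  obtain ⟨c, h1, h2, he⟩ := f_mem hf (show (2:ℕ) ≤ 8 by norm_num)
  interval_cases c <;>
    norm_num [hf.1, fv2 hf, fv3 hf, fv4 hf, fv5 hf, fv6 hf, fv7 hf] at he <;> omega

lemma f_master {f : ℕ → ℕ} (hf : fSpec f) : ∀ k : ℕ,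
    (9 ≤ k → f k = 3 * f (k - 3) + 1) ∧
    (8 ≤ k → f k ≤ 3 * f (k - 2)) ∧
    (7 ≤ k → 2 * f k ≤ 3 * f (k - 1)) ∧
    (6 ≤ k → 4 * f (k - 1) + 1 ≤ 3 * f k) := by
  intro k
  induction k using Nat.strong_induction_on with
  | _ k ih =>
  have v5 := fv5 hf; have v6 := fv6 hf; have v7 := fv7 hf; have v8 := fv8 hf
  have hP : 9 ≤ k → f k = 3 * f (k - 3) + 1 := by
    intro hk
    have lb : 3 * f (k - 3) + 1 ≤ f k :=
      f_ub hf (by omega) (by norm_num) (by omega)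
    obtain ⟨c, hc1, hc2, he⟩ := f_mem hf (show 2 ≤ k by omega)
    have hub : c * f (k - c) + 1 ≤ 3 * f (k - 3) + 1 := by
      rcases Nat.lt_or_ge c 5 with h5 | h5
      · interval_cases c
        · -- c = 1
          have h := (ih (k - 1) (by omega)).2.1 (by omega)
          have e : k - 1 - 2 = k - 3 := by omega
          rw [e] at h; omega
        · -- c = 2
          have h := (ih (k - 2) (by omega)).2.2.1 (by omega)
          have e : k - 2 - 1 = k - 3 := by omega
          rw [e] at h; omega
        · -- c = 3
          omega
        · -- c = 4
          have h := (ih (k - 3) (by omega)).2.2.2 (by omega)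
          have e : k - 3 - 1 = k - 4 := by omega
          rw [e] at h; omega
      · -- c ≥ 5
        have hA := fA hf (m := k - c) (c := c - 3) (by omega) (by omega)
        have e : k - c + (c - 3) = k - 3 := by omega
        rw [e] at hA
        have hcc : c * f (k - c) ≤ 3 * (c - 3) * f (k - c) :=
          Nat.mul_le_mul_right _ (by omega)
        rw [mul_assoc] at hcc
        have : (c - 3) * f (k - c) + 1 ≤ f (k - 3) := hA
        linarith
    rw [he]
    omega
  have hQ1 : 8 ≤ k → f k ≤ 3 * f (k - 2) := by
    intro hk
    rcases (show k = 8 ∨ k = 9 ∨ k = 10 ∨ 11 ≤ k by omega) with rfl | rfl | rfl | hk11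
    · norm_num [v6, v8]
    · have e := hP (by norm_num); norm_num [v6, v7] at e ⊢; omega
    · have e := hP (by norm_num); norm_num [v7, v8] at e ⊢; omega
    · have h1 := hP (by omega)
      have h2 := (ih (k - 2) (by omega)).1 (by omega)
      have e2 : k - 2 - 3 = k - 5 := by omega
      rw [e2] at h2
      have h3 := (ih (k - 3) (by omega)).2.1 (by omega)
      have e3 : k - 3 - 2 = k - 5 := by omega
      rw [e3] at h3
      omega
  have hQ2 : 7 ≤ k → 2 * f k ≤ 3 * f (k - 1) := by
    intro hk
    rcases (show k = 7 ∨ k = 8 ∨ k = 9 ∨ 10 ≤ k by omega) with rfl | rfl | rfl | hk10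
    · norm_num [v6, v7]
    · norm_num [v7, v8]
    · have e := hP (by norm_num); norm_num [v6, v8] at e ⊢; omega
    · have h1 := hP (by omega)
      have h2 := (ih (k - 1) (by omega)).1 (by omega)
      have e2 : k - 1 - 3 = k - 4 := by omega
      rw [e2] at h2
      have h3 := (ih (k - 3) (by omega)).2.2.1 (by omega)
      have e3 : k - 3 - 1 = k - 4 := by omega
      rw [e3] at h3
      omega
  have hQ4 : 6 ≤ k → 4 * f (k - 1) + 1 ≤ 3 * f k := by
    intro hk
    rcases (show k = 6 ∨ k = 7 ∨ k = 8 ∨ k = 9 ∨ 10 ≤ k by omega) with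
      rfl | rfl | rfl | rfl | hk10
    · norm_num [v5, v6]
    · norm_num [v6, v7]
    · norm_num [v7, v8]
    · have e := hP (by norm_num); norm_num [v6, v8] at e ⊢; omega
    · have h1 := hP (by omega)
      have h2 := (ih (k - 1) (by omega)).1 (by omega)
      have e2 : k - 1 - 3 = k - 4 := by omega
      rw [e2] at h2
      have h3 := (ih (k - 3) (by omega)).2.2.2 (by omega)
      have e3 : k - 3 - 1 = k - 4 := by omega
      rw [e3] at h3
      omega
  exact ⟨hP, hQ1, hQ2, hQ4⟩

/-- With `f` as above: `f 2 = 2`, `f 3 = 3`, `f 4 = 5`, `f 5 = 7`, and for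
every `i ≥ 2`: `f(3i) = (23·3^(i−2) − 1)/2`, `f(3i+1) = (33·3^(i−2) − 1)/2`, and
`f(3i+2) = (47·3^(i−2) − 1)/2` (stated with the division cleared). -/
theorem f_closed_form (f : ℕ → ℕ) (hf : fSpec f) :
    f 2 = 2 ∧ f 3 = 3 ∧ f 4 = 5 ∧ f 5 = 7 ∧
    ∀ i : ℕ, 2 ≤ i →
      2 * f (3 * i) = 23 * 3 ^ (i - 2) - 1 ∧
      2 * f (3 * i + 1) = 33 * 3 ^ (i - 2) - 1 ∧
      2 * f (3 * i + 2) = 47 * 3 ^ (i - 2) - 1 := by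
  refine ⟨fv2 hf, fv3 hf, fv4 hf, fv5 hf, ?_⟩
  intro i hi
  induction i, hi using Nat.le_induction with
  | base => norm_num [fv6 hf, fv7 hf, fv8 hf]
  | succ i hi ih =>
    obtain ⟨ih0, ih1, ih2⟩ := ih
    have hpow : 3 ^ (i + 1 - 2) = 3 * 3 ^ (i - 2) := by
      rw [show i + 1 - 2 = (i - 2) + 1 by omega, pow_succ]
      ring
    have hpos : 1 ≤ 3 ^ (i - 2) := Nat.one_le_pow _ _ (by norm_num)
    have h0 := (f_master hf (3 * (i + 1))).1 (by omega)
    have e0 : 3 * (i + 1) - 3 = 3 * i := by omega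
    rw [e0] at h0
    have h1 := (f_master hf (3 * (i + 1) + 1)).1 (by omega)
    have e1 : 3 * (i + 1) + 1 - 3 = 3 * i + 1 := by omega
    rw [e1] at h1
    have h2 := (f_master hf (3 * (i + 1) + 2)).1 (by omega)
    have e2 : 3 * (i + 1) + 2 - 3 = 3 * i + 2 := by omega
    rw [e2] at h2
    refine ⟨?_, ?_, ?_⟩ <;> omega
end

section
/- Let f be defined on positive integers by f(1) = 1 and f(k) = max{ c·f(k − c) + 1 : 1 ≤ c ≤ k − 1 } for k ≥ 2. Then for every k ≥ 2, f(k) = max{ c·f(k − c) + 1 : 1 ≤ c ≤ min(k − 1, 3) }, and for every k ≥ 9, f(k) = 3·f(k − 3) + 1. -/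
lemma aux_le (f : ℕ → ℕ) (hf : fSpec f) {k c : ℕ} (h1 : 1 ≤ c) (h2 : c + 1 ≤ k) :
    c * f (k - c) + 1 ≤ f k :=
  (hf.2 k (by omega)).2 ⟨c, h1, by omega, rfl⟩

lemma aux_ge (f : ℕ → ℕ) (hf : fSpec f) : ∀ m, 1 ≤ m → m ≤ f m := by
  intro m
  induction m with
  | zero => omega
  | succ n ih =>
    intro _
    rcases Nat.lt_or_ge n 1 with h | h
    · interval_cases n
      simp [hf.1]
    · have h2 := aux_le f hf (c := 1) (k := n + 1) le_rfl (by omega)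
      simp only [Nat.add_sub_cancel, one_mul] at h2
      have := ih h
      omega

lemma aux_part1 (f : ℕ → ℕ) (hf : fSpec f) : ∀ k : ℕ, 2 ≤ k →
    IsGreatest {n : ℕ | ∃ c : ℕ, 1 ≤ c ∧ c ≤ min (k - 1) 3 ∧ n = c * f (k - c) + 1} (f k) := by
  intro k hk
  constructor
  · obtain ⟨c, hc1, hc2, hc3⟩ := (hf.2 k hk).1
    rcases Nat.lt_or_ge c 4 with h4 | h4
    · exact ⟨c, hc1, by omega, hc3⟩
    · rcases Nat.eq_or_lt_of_le h4 with rfl | h5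
      · -- c = 4 : contradiction
        exfalso
        have e1 : k - 2 - 2 = k - 4 := by omega
        have h1 : 2 * f (k - 4) + 1 ≤ f (k - 2) := by
          have := aux_le f hf (c := 2) (k := k - 2) (by omega) (by omega)
          rwa [e1] at this
        have h2 : 2 * f (k - 2) + 1 ≤ f k := aux_le f hf (by omega) (by omega)
        omega
      · -- c ≥ 5
        have e1 : k - 3 - (c - 3) = k - c := by omega
        have h1 : (c - 3) * f (k - c) + 1 ≤ f (k - 3) := by
          have := aux_le f hf (c := c - 3) (k := k - 3) (by omega) (by omega)
          rwa [e1] at this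
        have h2 : 3 * f (k - 3) + 1 ≤ f k := aux_le f hf (by omega) (by omega)
        have h3 : f k ≤ 3 * f (k - 3) + 1 := by
          rw [hc3]
          have hm : c * f (k - c) ≤ 3 * ((c - 3) * f (k - c)) := by
            calc c * f (k - c) ≤ 3 * (c - 3) * f (k - c) :=
                  Nat.mul_le_mul_right _ (by omega)
              _ = 3 * ((c - 3) * f (k - c)) := by ring
          omega
        exact ⟨3, by omega, by omega, by omega⟩
  · rintro n ⟨c, hc1, hc2, rfl⟩
    exact aux_le f hf hc1 (by omega)

lemma aux_A (f : ℕ → ℕ) (hf : fSpec f) {k : ℕ} (hk : 9 ≤ k) :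
    2 * f (k - 2) ≤ 3 * f (k - 3) := by
  obtain ⟨c, hc1, hc2, hc3⟩ := (aux_part1 f hf (k - 2) (by omega)).1
  have hmin : min (k - 2 - 1) 3 = 3 := by omega
  rw [hmin] at hc2
  have g5 : k - 5 ≤ f (k - 5) := aux_ge f hf _ (by omega)
  have g3 : k - 3 ≤ f (k - 3) := aux_ge f hf _ (by omega)
  interval_cases c
  · -- c = 1 : f(k-2) = f(k-3) + 1
    have e : k - 2 - 1 = k - 3 := by omega
    rw [e, one_mul] at hc3
    omega
  · -- c = 2 : f(k-2) = 2 f(k-4) + 1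
    have e : k - 2 - 2 = k - 4 := by omega
    rw [e] at hc3
    obtain ⟨c', hc1', hc2', hc3'⟩ := (aux_part1 f hf (k - 4) (by omega)).1
    have hmin' : min (k - 4 - 1) 3 = 3 := by omega
    rw [hmin'] at hc2'
    interval_cases c'
    · have e' : k - 4 - 1 = k - 5 := by omega
      rw [e', one_mul] at hc3'
      have hA : 2 * f (k - 5) + 1 ≤ f (k - 3) := by
        have := aux_le f hf (c := 2) (k := k - 3) (by omega) (by omega)
        have e'' : k - 3 - 2 = k - 5 := by omega
        rwa [e''] at this
      omega
    · have e' : k - 4 - 2 = k - 6 := by omega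
      rw [e'] at hc3'
      have g6 : k - 6 ≤ f (k - 6) := aux_ge f hf _ (by omega)
      have hA : 3 * f (k - 6) + 1 ≤ f (k - 3) := by
        have := aux_le f hf (c := 3) (k := k - 3) (by omega) (by omega)
        have e'' : k - 3 - 3 = k - 6 := by omega
        rwa [e''] at this
      omega
    · have e' : k - 4 - 3 = k - 7 := by omega
      rw [e'] at hc3'
      have hA : 2 * f (k - 7) + 1 ≤ f (k - 5) := by
        have := aux_le f hf (c := 2) (k := k - 5) (by omega) (by omega)
        have e'' : k - 5 - 2 = k - 7 := by omega
        rwa [e''] at this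
      have hB : 2 * f (k - 5) + 1 ≤ f (k - 3) := by
        have := aux_le f hf (c := 2) (k := k - 3) (by omega) (by omega)
        have e'' : k - 3 - 2 = k - 5 := by omega
        rwa [e''] at this
      omega
  · -- c = 3 : f(k-2) = 3 f(k-5) + 1
    have e : k - 2 - 3 = k - 5 := by omega
    rw [e] at hc3
    have hA : 2 * f (k - 5) + 1 ≤ f (k - 3) := by
      have := aux_le f hf (c := 2) (k := k - 3) (by omega) (by omega)
      have e'' : k - 3 - 2 = k - 5 := by omega
      rwa [e''] at this
    omega

lemma aux_B (f : ℕ → ℕ) (hf : fSpec f) {k : ℕ} (hk : 9 ≤ k) :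
    f (k - 1) ≤ 3 * f (k - 3) := by
  obtain ⟨c, hc1, hc2, hc3⟩ := (aux_part1 f hf (k - 1) (by omega)).1
  have hmin : min (k - 1 - 1) 3 = 3 := by omega
  rw [hmin] at hc2
  have g2 : k - 2 ≤ f (k - 2) := aux_ge f hf _ (by omega)
  have g3 : k - 3 ≤ f (k - 3) := aux_ge f hf _ (by omega)
  interval_cases c
  · have e : k - 1 - 1 = k - 2 := by omega
    rw [e, one_mul] at hc3
    have hA := aux_A f hf hk
    omega
  · have e : k - 1 - 2 = k - 3 := by omega
    rw [e] at hc3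
    omega
  · have e : k - 1 - 3 = k - 4 := by omega
    rw [e] at hc3
    have hA : 1 * f (k - 4) + 1 ≤ f (k - 3) := by
      have := aux_le f hf (c := 1) (k := k - 3) (by omega) (by omega)
      have e'' : k - 3 - 1 = k - 4 := by omega
      rwa [e''] at this
    omega

/-- With `f` as above: for every `k ≥ 2`,
`f k = max { c * f (k - c) + 1 : 1 ≤ c ≤ min (k − 1) 3 }`, and for every `k ≥ 9`,
`f k = 3 * f (k − 3) + 1`. -/
theorem f_restricted_recurrence (f : ℕ → ℕ) (hf : fSpec f) :
    (∀ k : ℕ, 2 ≤ k →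
      IsGreatest {n : ℕ | ∃ c : ℕ, 1 ≤ c ∧ c ≤ min (k - 1) 3 ∧ n = c * f (k - c) + 1} (f k)) ∧
    (∀ k : ℕ, 9 ≤ k → f k = 3 * f (k - 3) + 1) := by
  refine ⟨aux_part1 f hf, fun k hk => ?_⟩
  have h2 : 3 * f (k - 3) + 1 ≤ f k := aux_le f hf (by omega) (by omega)
  obtain ⟨c, hc1, hc2, hc3⟩ := (aux_part1 f hf k (by omega)).1
  have hmin : min (k - 1) 3 = 3 := by omega
  rw [hmin] at hc2
  interval_cases c
  · have e : k - 1 - 0 = k - 1 := by omega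
    rw [one_mul] at hc3
    have hB := aux_B f hf hk
    omega
  · have hA := aux_A f hf hk
    omega
  · omega
end

section
/- Let f be defined on positive integers by f(1) = 1 and f(k) = max{ c·f(k − c) + 1 : 1 ≤ c ≤ k − 1 } for k ≥ 2. Then for every integer k ≥ 2, 5·f(k) ≥ 7·f(k − 1). -/
/-- With `f` as above: for every `k ≥ 2`, `f k / f (k − 1) ≥ 7/5`,
i.e. `5 * f k ≥ 7 * f (k − 1)`. -/
theorem f_ratio_lower_bound (f : ℕ → ℕ) (hf : fSpec f) :
    ∀ k : ℕ, 2 ≤ k → 7 * f (k - 1) ≤ 5 * f k := by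
  obtain ⟨h1, H⟩ := hf
  have fub : ∀ k c : ℕ, 2 ≤ k → 1 ≤ c → c ≤ k - 1 → c * f (k - c) + 1 ≤ f k :=
    fun k c hk hc1 hc2 => (H k hk).2 ⟨c, hc1, hc2, rfl⟩
  have fpos : ∀ k, 1 ≤ k → 1 ≤ f k := by
    intro k hk
    rcases eq_or_lt_of_le hk with h | h
    · rw [← h, h1]
    · obtain ⟨c, _, _, he⟩ := (H k h).1
      omega
  have mono : ∀ n, 2 ≤ n → f (n - 1) + 1 ≤ f n := by
    intro n hn
    have := fub n 1 hn le_rfl (by omega)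
    simpa using this
  have flb3 : ∀ n, 3 ≤ n → 3 ≤ f n := by
    intro n hn
    have a := mono n (by omega)
    have b := mono (n - 1) (by omega)
    have c := fpos (n - 2) (by omega)
    have e : n - 1 - 1 = n - 2 := by omega
    rw [e] at b
    omega
  -- exact small values
  have hf2 : f 2 = 2 := by
    obtain ⟨c, hc1, hc2, he⟩ := (H 2 (by norm_num)).1
    norm_num at hc2
    have : c = 1 := by omega
    subst this
    norm_num [h1] at he
    omega
  have hf3 : f 3 = 3 := by
    obtain ⟨c, hc1, hc2, he⟩ := (H 3 (by norm_num)).1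
    norm_num at hc2
    interval_cases c <;> norm_num [h1, hf2] at he <;> omega
  have hf4 : f 4 = 5 := by
    have hL := fub 4 2 (by norm_num) (by norm_num) (by norm_num)
    norm_num [hf2] at hL
    obtain ⟨c, hc1, hc2, he⟩ := (H 4 (by norm_num)).1
    norm_num at hc2
    interval_cases c <;> norm_num [h1, hf2, hf3] at he <;> omega
  have hf5 : f 5 = 7 := by
    have hL := fub 5 2 (by norm_num) (by norm_num) (by norm_num)
    norm_num [hf3] at hL
    obtain ⟨c, hc1, hc2, he⟩ := (H 5 (by norm_num)).1
    norm_num at hc2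
    interval_cases c <;> norm_num [h1, hf2, hf3, hf4] at he <;> omega
  have hf6 : f 6 = 11 := by
    have hL := fub 6 2 (by norm_num) (by norm_num) (by norm_num)
    norm_num [hf4] at hL
    obtain ⟨c, hc1, hc2, he⟩ := (H 6 (by norm_num)).1
    norm_num at hc2
    interval_cases c <;> norm_num [h1, hf2, hf3, hf4, hf5] at he <;> omega
  have hf7 : f 7 = 16 := by
    have hL := fub 7 3 (by norm_num) (by norm_num) (by norm_num)
    norm_num [hf4] at hL
    obtain ⟨c, hc1, hc2, he⟩ := (H 7 (by norm_num)).1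
    norm_num at hc2
    interval_cases c <;> norm_num [h1, hf2, hf3, hf4, hf5, hf6] at he <;> omega
  -- strengthened bound for k ≥ 6
  have P : ∀ k, 6 ≤ k → 7 * f (k - 1) + 1 ≤ 5 * f k := by
    intro k
    induction k using Nat.strong_induction_on with
    | _ k IH =>
      intro hk
      have hcase : k = 6 ∨ k = 7 ∨ k = 8 ∨ 9 ≤ k := by omega
      rcases hcase with rfl | rfl | rfl | h9
      · norm_num [hf5, hf6]
      · norm_num [hf6, hf7]
      · have hL := fub 8 2 (by norm_num) (by norm_num) (by norm_num)
        norm_num [hf6] at hL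
        norm_num [hf7]
        omega
      · obtain ⟨c, hc1, hc2, he⟩ := (H (k - 1) (by omega)).1
        have hc2' : c ≤ k - 2 := by omega
        have hsplit : c = 1 ∨ c = 2 ∨ c = 3 ∨ 4 ≤ c := by omega
        rcases hsplit with rfl | rfl | rfl | h4
        · -- c = 1
          have e : k - 1 - 1 = k - 2 := by omega
          rw [e, one_mul] at he
          have hA := fub k 2 (by omega) (by omega) (by omega)
          have := fpos (k - 2) (by omega)
          omega
        · -- c = 2
          have e : k - 1 - 2 = k - 3 := by omega
          rw [e] at he
          have hA := fub k 3 (by omega) (by omega) (by omega)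
          have := flb3 (k - 3) (by omega)
          omega
        · -- c = 3
          have e : k - 1 - 3 = k - 4 := by omega
          rw [e] at he
          have hA := fub k 3 (by omega) (by omega) (by omega)
          have hI := IH (k - 3) (by omega) (by omega)
          have e2 : k - 3 - 1 = k - 4 := by omega
          rw [e2] at hI
          omega
        · -- c ≥ 4 : impossible by maximality
          exfalso
          obtain ⟨d, rfl⟩ : ∃ d, c = d + 4 := ⟨c - 4, by omega⟩
          have hA := fub (k - 1) 2 (by omega) (by omega) (by omega)
          have e : k - 1 - 2 = k - 3 := by omega
          rw [e] at hA
          have hB := fub (k - 3) (d + 2) (by omega) (by omega) (by omega)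
          have e2 : k - 3 - (d + 2) = k - 1 - (d + 4) := by omega
          rw [e2] at hB
          have hD := fpos (k - 1 - (d + 4)) (by omega)
          set x := f (k - 1 - (d + 4)) with hx
          nlinarith [hA, hB, he, hD, Nat.zero_le (d * x)]
  intro k hk
  have hcase : k = 2 ∨ k = 3 ∨ k = 4 ∨ k = 5 ∨ 6 ≤ k := by omega
  rcases hcase with rfl | rfl | rfl | rfl | h6
  · norm_num [h1, hf2]
  · norm_num [hf2, hf3]
  · norm_num [hf3, hf4]
  · norm_num [hf4, hf5]
  · have := P k h6
    omega
end
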